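/- arXiv:1505.06650 — 13 statements merged into one kernel-verified Lean document; each statement's English description precedes it below -/
import Mathlib

section
/- For every integer n ≥ 2, (P_n)^(2/n) > (P_{n-1})^(1/(n-1)) · (P_{n+1})^(1/(n+1)); that is, the sequence {P_n^(1/n)}_{n≥1} is strictly log-concave. -/
/-
Taking logarithms, the claim at `n` reads
`n (n + 1) log P (n - 1) + n (n - 1) log P (n + 1) < 2 (n ^ 2 - 1) log P n`,
in which a factor `l ^ k` on each `P k` cancels. By induction from the recurrence, starting at
`n = 4`, the ratios satisfy `16 (n - 1) / n ≤ P (n + 1) / P n ≤ 16 n / (n + 1)`, hence also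
`n P n ≤ 16 ^ n`. With `log (1 + x) ≤ x` these bounds reduce the claim to
`n (n + 1) / (n - 2) - n (n - 1) / (n + 1) < 2 log n`, which holds for `n ≥ 16`. The remaining
cases `2 ≤ n < 16` are checked in exact rational arithmetic, the recurrence determining `P`.
-/

open Real

lemma log_sub_log_le_div {x y : ℝ} (hx : 0 < x) (hy : 0 < y) : log y - log x ≤ (y - x) / x := by
  rw [← log_div hy.ne' hx.ne', sub_div, div_self hx.ne']
  exact log_le_sub_one_of_pos (div_pos hy hx)

lemma rpow_mul_rpow_lt_rpow_of_log {a b c N : ℝ} (ha : 0 < a) (hb : 0 < b) (hc : 0 < c) (hN : 1 < N)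
    (h : N * (N + 1) * log b + N * (N - 1) * log c < 2 * (N ^ 2 - 1) * log a) :
    b ^ (1 / (N - 1)) * c ^ (1 / (N + 1)) < a ^ (2 / N) := by
  rw [rpow_def_of_pos ha, rpow_def_of_pos hb, rpow_def_of_pos hc, ← exp_add, exp_lt_exp]
  have hden : 0 < N * (N - 1) * (N + 1) := by
    have : 0 < N - 1 := sub_pos.mpr hN
    positivity
  have key : log a * (2 / N) - (log b * (1 / (N - 1)) + log c * (1 / (N + 1)))
      = (2 * (N ^ 2 - 1) * log a - (N * (N + 1) * log b + N * (N - 1) * log c))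
        / (N * (N - 1) * (N + 1)) := by
    have : N - 1 ≠ 0 := (sub_pos.mpr hN).ne'
    field_simp
    ring
  have := div_pos (sub_pos.mpr h) hden
  linarith

lemma log_combination_lt_of_pow_lt {a b c : ℝ} {n : ℕ} (hn : 1 ≤ n) (hb : 0 < b) (hc : 0 < c)
    (h : b ^ (n * (n + 1)) * c ^ (n * (n - 1)) < a ^ (2 * (n ^ 2 - 1))) :
    (n : ℝ) * (n + 1) * log b + n * (n - 1) * log c < 2 * ((n : ℝ) ^ 2 - 1) * log a := by
  have hlog := log_lt_log (by positivity) h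
  rw [log_mul (by positivity) (by positivity), log_pow, log_pow, log_pow] at hlog
  have hn2 : 1 ≤ n ^ 2 := Nat.one_le_pow _ _ hn
  push_cast [Nat.cast_sub hn, Nat.cast_sub hn2] at hlog
  linarith

lemma mul_div_sub_mul_div_lt_two_mul_log {N : ℝ} (hN : 16 ≤ N) :
    N * (N + 1) / (N - 2) - N * (N - 1) / (N + 1) < 2 * log N := by
  have hfrac : N * (N + 1) / (N - 2) - N * (N - 1) / (N + 1) ≤ 11 / 2 := by
    rw [div_sub_div _ _ (by linarith) (by linarith), div_le_iff₀ (by nlinarith)]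
    nlinarith
  have hlog16 : log 16 = 4 * log 2 := by
    rw [show (16 : ℝ) = 2 ^ 4 by norm_num, log_pow]
    norm_num
  have := log_le_log (by norm_num) hN
  linarith [log_two_gt_d9]

lemma log_combination_lt_of_ratio_bounds {l a b c : ℝ} {n : ℕ} (hn : 16 ≤ n) (hl : 0 < l)
    (ha : 0 < a) (hb : 0 < b) (hc : 0 < c)
    (hba : l * (n - 2) * b ≤ (n - 1) * a) (hca : (n + 1) * c ≤ l * n * a) (ha_le : n * a ≤ l ^ n) :
    (n : ℝ) * (n + 1) * log b + n * (n - 1) * log c < 2 * ((n : ℝ) ^ 2 - 1) * log a := by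
  have hN : (16 : ℝ) ≤ n := by exact_mod_cast hn
  have hb_le : log b ≤ log a - log l + 1 / (n - 2) := by
    have hn2 : (0 : ℝ) < n - 2 := by linarith
    have h := log_le_log (by positivity) hba
    rw [log_mul (by positivity) hb.ne', log_mul hl.ne' hn2.ne',
      log_mul (by linarith) ha.ne'] at h
    have := log_sub_log_le_div (x := (n : ℝ) - 2) (y := n - 1) (by linarith) (by linarith)
    rw [show ((n : ℝ) - 1 - (n - 2)) = 1 by ring] at this
    linarith
  have hc_le : log c ≤ log a + log l - 1 / (n + 1) := by
    have h := log_le_log (by positivity) hca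
    rw [log_mul (by positivity) hc.ne', log_mul (by positivity) ha.ne',
      log_mul hl.ne' (by positivity)] at h
    have := log_sub_log_le_div (x := (n : ℝ) + 1) (y := n) (by linarith) (by linarith)
    rw [show ((n : ℝ) - (n + 1)) / (n + 1) = -(1 / (n + 1)) by ring] at this
    linarith
  have ha_le' : log n + log a ≤ n * log l := by
    have h := log_le_log (by positivity) ha_le
    rwa [log_mul (by positivity) ha.ne', log_pow] at h
  have hfrac := mul_div_sub_mul_div_lt_two_mul_log hN
  have h1 := mul_le_mul_of_nonneg_left hb_le (by positivity : (0 : ℝ) ≤ n * (n + 1))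
  have h2 := mul_le_mul_of_nonneg_left hc_le (by nlinarith : (0 : ℝ) ≤ n * (n - 1))
  have hsum : (n : ℝ) * (n + 1) * (log a - log l + 1 / (n - 2))
      + n * (n - 1) * (log a + log l - 1 / (n + 1))
      = 2 * n ^ 2 * log a - 2 * n * log l
        + (n * (n + 1) / (n - 2) - n * (n - 1) / (n + 1)) := by ring
  linarith

def catalanLarcombeFrench : ℕ → ℚ
  | 0 => 1
  | 1 => 8
  | n + 2 => (8 * (3 * (n + 1) ^ 2 + 3 * (n + 1) + 1) * catalanLarcombeFrench (n + 1)
      - 128 * (n + 1) ^ 2 * catalanLarcombeFrench n) / (n + 2) ^ 2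

theorem catalanLarcombeFrench_pow_lt : ∀ n < 16, 2 ≤ n →
    catalanLarcombeFrench (n - 1) ^ (n * (n + 1)) * catalanLarcombeFrench (n + 1) ^ (n * (n - 1))
      < catalanLarcombeFrench n ^ (2 * (n ^ 2 - 1)) := by
  decide +kernel

def SatisfiesCLFRecurrence (P : ℕ → ℝ) : Prop :=
  ∀ n : ℕ, ((n : ℝ) + 2) ^ 2 * P (n + 2)
    = 8 * (3 * ((n : ℝ) + 1) ^ 2 + 3 * ((n : ℝ) + 1) + 1) * P (n + 1) - 128 * ((n : ℝ) + 1) ^ 2 * P n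

namespace SatisfiesCLFRecurrence

variable {P : ℕ → ℝ}

theorem eq_catalanLarcombeFrench (hrec : SatisfiesCLFRecurrence P) (h0 : P 0 = 1) (h1 : P 1 = 8) :
    ∀ n, P n = catalanLarcombeFrench n
  | 0 => by simp [h0, catalanLarcombeFrench]
  | 1 => by simp [h1, catalanLarcombeFrench]
  | n + 2 => by
    have hsq : ((n : ℝ) + 2) ^ 2 ≠ 0 := by positivity
    rw [catalanLarcombeFrench, Rat.cast_div, Rat.cast_pow]
    push_cast
    rw [eq_div_iff hsq, mul_comm, hrec n,
      eq_catalanLarcombeFrench hrec h0 h1 n, eq_catalanLarcombeFrench hrec h0 h1 (n + 1)]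

theorem succ_mul_le (hrec : SatisfiesCLFRecurrence P) (hpos : ∀ n, 0 < P n)
    (h4 : P 4 = 10816) (h5 : P 5 = 137728) :
    ∀ n : ℕ, 4 ≤ n → ((n : ℝ) + 1) * P (n + 1) ≤ 16 * n * P n := by
  intro n hn
  induction n, hn using Nat.le_induction with
  | base => norm_num [h4, h5]
  | succ n hn ih =>
    have hn' : (4 : ℝ) ≤ n := by exact_mod_cast hn
    have hP := hpos (n + 1)
    have ih' := mul_le_mul_of_nonneg_left ih (by positivity : (0 : ℝ) ≤ 8 * ((n : ℝ) + 1) ^ 2)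
    have hrec' := congrArg ((n : ℝ) * ·) (hrec n)
    have key : (n : ℝ) * (n + 2) * ((n + 2) * P (n + 2)) ≤ n * (n + 2) * (16 * (n + 1) * P (n + 1)) := by
      linarith
    push_cast
    rw [show (n : ℝ) + 1 + 1 = n + 2 by ring]
    exact le_of_mul_le_mul_left key (by positivity)

theorem mul_le_succ_mul (hrec : SatisfiesCLFRecurrence P) (hpos : ∀ n, 0 < P n)
    (h4 : P 4 = 10816) (h5 : P 5 = 137728) :
    ∀ n : ℕ, 4 ≤ n → 16 * ((n : ℝ) - 1) * P n ≤ n * P (n + 1) := by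
  intro n hn
  induction n, hn using Nat.le_induction with
  | base => norm_num [h4, h5]
  | succ n hn ih =>
    have hn' : (4 : ℝ) ≤ n := by exact_mod_cast hn
    have hP := hpos (n + 1)
    have ih' := mul_le_mul_of_nonneg_left ih (by positivity : (0 : ℝ) ≤ 8 * ((n : ℝ) + 1) ^ 3)
    have hrec' := congrArg (((n : ℝ) + 1) * (n - 1) * ·) (hrec n)
    -- the step needs `(n + 1) ^ 2 - 4 * (n + 1) - 4 ≥ 0`, which is why the induction starts at 4
    have hgap : 0 ≤ ((n : ℝ) ^ 2 - 2 * n - 7) * P (n + 1) := by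
      apply mul_nonneg _ hP.le
      nlinarith
    have key : ((n : ℝ) - 1) * (n + 2) ^ 2 * (16 * n * P (n + 1))
        ≤ ((n : ℝ) - 1) * (n + 2) ^ 2 * ((n + 1) * P (n + 2)) := by
      linarith
    push_cast
    rw [show (n : ℝ) + 1 - 1 = n by ring]
    exact le_of_mul_le_mul_left key (by nlinarith)

end SatisfiesCLFRecurrence

theorem mul_le_pow_of_succ_mul_le {P : ℕ → ℝ} {l : ℝ} {m : ℕ} (hl : 0 ≤ l)
    (hP : ∀ n : ℕ, m ≤ n → ((n : ℝ) + 1) * P (n + 1) ≤ l * n * P n) (hm : m * P m ≤ l ^ m) :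
    ∀ n : ℕ, m ≤ n → n * P n ≤ l ^ n := by
  intro n hn
  induction n, hn using Nat.le_induction with
  | base => exact hm
  | succ n hn ih =>
    push_cast
    calc ((n : ℝ) + 1) * P (n + 1) ≤ l * (n * P n) := by linarith [hP n hn]
      _ ≤ l * l ^ n := mul_le_mul_of_nonneg_left ih hl
      _ = l ^ (n + 1) := (pow_succ' l n).symm

theorem Pn_root_log_concave (P : ℕ → ℝ)
    (hP0 : P 0 = 1) (hP1 : P 1 = 8)
    (hPrec : ∀ n : ℕ, 1 ≤ n →
      ((n : ℝ) + 1) ^ 2 * P (n + 1)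
        = 8 * (3 * (n : ℝ) ^ 2 + 3 * (n : ℝ) + 1) * P n - 128 * (n : ℝ) ^ 2 * P (n - 1))
    (hPpos : ∀ n : ℕ, 0 < P n) :
    ∀ n : ℕ, 2 ≤ n →
      P n ^ ((2 : ℝ) / (n : ℝ))
        > P (n - 1) ^ ((1 : ℝ) / ((n : ℝ) - 1)) * P (n + 1) ^ ((1 : ℝ) / ((n : ℝ) + 1)) := by
  have hrec : SatisfiesCLFRecurrence P := fun n => by
    have h := hPrec (n + 1) (by omega)
    push_cast at h
    linear_combination h
  have hclf := hrec.eq_catalanLarcombeFrench hP0 hP1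
  have h4 : P 4 = 10816 := by rw [hclf]; norm_num [catalanLarcombeFrench]
  have h5 : P 5 = 137728 := by rw [hclf]; norm_num [catalanLarcombeFrench]
  have hup := hrec.succ_mul_le hPpos h4 h5
  have hlo := hrec.mul_le_succ_mul hPpos h4 h5
  have hbound := mul_le_pow_of_succ_mul_le (by norm_num) hup (by norm_num [h4])
  intro n hn
  refine rpow_mul_rpow_lt_rpow_of_log (hPpos n) (hPpos _) (hPpos _) (by exact_mod_cast hn) ?_
  rcases lt_or_ge n 16 with hsmall | hlarge
  · have hpos k : (0 : ℝ) < catalanLarcombeFrench k := hclf k ▸ hPpos k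
    rw [hclf, hclf, hclf]
    exact log_combination_lt_of_pow_lt (by omega) (hpos _) (hpos _)
      (by exact_mod_cast catalanLarcombeFrench_pow_lt n hsmall hn)
  · obtain ⟨m, rfl⟩ : ∃ m, n = m + 1 := ⟨n - 1, by omega⟩
    refine log_combination_lt_of_ratio_bounds hlarge (by norm_num) (hPpos _) (hPpos _) (hPpos _)
      ?_ (hup _ (by omega)) (hbound _ (by omega))
    have := hlo m (by omega)
    push_cast
    linarith
end

section
/- For every integer n ≥ 2, (V_n)^(2/n) > (V_{n-1})^(1/(n-1)) · (V_{n+1})^(1/(n+1)); that is, the sequence {V_n^(1/n)}_{n≥1} is strictly log-concave. -/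
set_option maxHeartbeats 1000000


theorem Vn_root_log_concave (V : ℕ → ℝ)
    (hV0 : V 0 = 1) (hV1 : V 1 = 8)
    (hVrec : ∀ n : ℕ, 1 ≤ n →
      (n : ℝ) * ((n : ℝ) + 1) ^ 2 * V (n + 1)
        = 8 * (n : ℝ) * (3 * (n : ℝ) ^ 2 + 5 * (n : ℝ) + 1) * V n
          - 128 * ((n : ℝ) - 1) * ((n : ℝ) + 1) ^ 2 * V (n - 1))
    (hVpos : ∀ n : ℕ, 0 < V n) :
    ∀ n : ℕ, 2 ≤ n →
      V n ^ ((2 : ℝ) / (n : ℝ))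
        > V (n - 1) ^ ((1 : ℝ) / ((n : ℝ) - 1)) * V (n + 1) ^ ((1 : ℝ) / ((n : ℝ) + 1)) := by
  -- cleaned recurrence
  have rec' : ∀ m : ℕ, 1 ≤ m →
      ((m:ℝ)+1) * ((m:ℝ)+2)^2 * V (m+2)
        = 8*((m:ℝ)+1)*(3*(m:ℝ)^2+11*(m:ℝ)+9) * V (m+1)
          - 128*(m:ℝ)*((m:ℝ)+2)^2 * V m := by
    intro m hm
    have h := hVrec (m+1) (by omega)
    have hidx : m + 1 - 1 = m := rfl
    rw [hidx] at h
    simp only [show m+1+1 = m+2 from rfl] at h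
    push_cast at h
    linear_combination h
  -- values
  have hV2 : V 2 = 144 := by
    have h := hVrec 1 le_rfl
    norm_num [hV0, hV1] at h
    linarith
  have hV3 : V 3 = 2432 := by
    have h := hVrec 2 (by norm_num)
    norm_num [hV1, hV2] at h
    linarith
  -- upper bound on ratios:  (n+1)(2n-1) V(n+1) ≤ 16 n (2n+1) V n
  have lemB : ∀ n : ℕ, 1 ≤ n →
      ((n:ℝ)+1)*(2*(n:ℝ)-1)*V (n+1) ≤ 16*(n:ℝ)*(2*(n:ℝ)+1)*V n := by
    intro n hn
    induction n, hn using Nat.le_induction with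
    | base => norm_num [hV1, hV2]
    | succ n hn IH =>
      have hc : (1:ℝ) ≤ (n:ℝ) := by exact_mod_cast hn
      have hr := rec' n hn
      have h3 : (2*(n:ℝ)+1)*(((n:ℝ)+1)*((n:ℝ)+2)^2*V (n+2))
          = 8*(2*(n:ℝ)+1)*((n:ℝ)+1)*(3*(n:ℝ)^2+11*(n:ℝ)+9)*V (n+1)
            - 128*(n:ℝ)*((n:ℝ)+2)^2*(2*(n:ℝ)+1)*V n := by
        linear_combination (2*(n:ℝ)+1) * hr
      have h2 := mul_le_mul_of_nonneg_left IH (by positivity : (0:ℝ) ≤ 8*((n:ℝ)+2)^2)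
      have hQ : 0 ≤ ((n:ℝ)+1)*(8*(n:ℝ)-8)*V (n+1) := by
        have := (hVpos (n+1)).le
        have h8 : (0:ℝ) ≤ 8*(n:ℝ)-8 := by linarith
        positivity
      have h4 : (((n:ℝ)+1)*((n:ℝ)+2)) * (((n:ℝ)+2)*(2*(n:ℝ)+1)*V (n+2))
          ≤ (((n:ℝ)+1)*((n:ℝ)+2)) * (16*((n:ℝ)+1)*(2*(n:ℝ)+3)*V (n+1)) := by
        nlinarith [h3, h2, hQ]
      have h5 := le_of_mul_le_mul_left h4 (by positivity : (0:ℝ) < ((n:ℝ)+1)*((n:ℝ)+2))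
      simp only [show n+1+1 = n+2 from rfl]
      push_cast
      linarith
  -- V n ≤ (2n-1)/(2n) · 16^n
  have lemC : ∀ n : ℕ, 1 ≤ n → 2*(n:ℝ)*V n ≤ (2*(n:ℝ)-1)*(16:ℝ)^n := by
    intro n hn
    induction n, hn using Nat.le_induction with
    | base => norm_num [hV1]
    | succ n hn IH =>
      have hc : (1:ℝ) ≤ (n:ℝ) := by exact_mod_cast hn
      have hB := lemB n hn
      have h2 := mul_le_mul_of_nonneg_left IH (by positivity : (0:ℝ) ≤ 8*(2*(n:ℝ)+1))
      have h4 : (2*(n:ℝ)-1) * (2*((n:ℝ)+1)*V (n+1))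
          ≤ (2*(n:ℝ)-1) * ((2*(n:ℝ)+1)*((16:ℝ)^n*16)) := by nlinarith [hB, h2]
      have h5 := le_of_mul_le_mul_left h4 (by linarith : (0:ℝ) < 2*(n:ℝ)-1)
      push_cast
      rw [pow_succ]
      linarith
  -- lower bound on ratios:  16(n(n+1)^2+1) V n ≤ n(n+1)^2 V(n+1), n ≥ 2
  have lemA : ∀ n : ℕ, 2 ≤ n →
      16*((n:ℝ)*((n:ℝ)+1)^2+1)*V n ≤ (n:ℝ)*((n:ℝ)+1)^2*V (n+1) := by
    intro n hn
    induction n, hn using Nat.le_induction with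
    | base => norm_num [hV2, hV3]
    | succ n hn IH =>
      have hc : (2:ℝ) ≤ (n:ℝ) := by exact_mod_cast hn
      have hr := rec' n (by omega)
      have h3 : ((n:ℝ)*((n:ℝ)+1)^2+1)*(((n:ℝ)+1)*((n:ℝ)+2)^2*V (n+2))
          = 8*((n:ℝ)*((n:ℝ)+1)^2+1)*((n:ℝ)+1)*(3*(n:ℝ)^2+11*(n:ℝ)+9)*V (n+1)
            - 128*(n:ℝ)*((n:ℝ)+2)^2*(((n:ℝ)*((n:ℝ)+1)^2+1)*V n) := by
        linear_combination ((n:ℝ)*((n:ℝ)+1)^2+1) * hr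
      have h2 := mul_le_mul_of_nonneg_left IH
        (by positivity : (0:ℝ) ≤ 8*(n:ℝ)*((n:ℝ)+2)^2)
      have hP1 : 0 ≤ (16*(n:ℝ)^2+24*(n:ℝ)-8)*V (n+1) := by
        have := (hVpos (n+1)).le
        have h8 : (0:ℝ) ≤ 16*(n:ℝ)^2+24*(n:ℝ)-8 := by nlinarith
        positivity
      have h4 : ((n:ℝ)*((n:ℝ)+1)^2+1) * (16*(((n:ℝ)+1)*((n:ℝ)+2)^2+1)*V (n+1))
          ≤ ((n:ℝ)*((n:ℝ)+1)^2+1) * (((n:ℝ)+1)*((n:ℝ)+2)^2*V (n+2)) := by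
        nlinarith [h3, h2, hP1]
      have h5 := le_of_mul_le_mul_left h4
        (by positivity : (0:ℝ) < (n:ℝ)*((n:ℝ)+1)^2+1)
      simp only [show n+1+1 = n+2 from rfl]
      push_cast
      linarith
  -- strict ratio bound:  16 V n < V (n+1)  for n ≥ 1
  have lem16 : ∀ n : ℕ, 1 ≤ n → 16 * V n < V (n+1) := by
    intro n hn
    rcases Nat.lt_or_ge n 2 with h2 | h2
    · interval_cases n
      rw [hV1, hV2]; norm_num
    · have hA := lemA n h2
      have hc : (2:ℝ) ≤ (n:ℝ) := by exact_mod_cast h2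
      have ht := hVpos n
      nlinarith [hA, mul_pos (show (0:ℝ) < (n:ℝ)*((n:ℝ)+1)^2 by positivity) ht]
  -- V n < 16^n for n ≥ 1
  have lemP : ∀ n : ℕ, 1 ≤ n → V n < (16:ℝ)^n := by
    intro n hn
    have hC := lemC n hn
    have hc : (1:ℝ) ≤ (n:ℝ) := by exact_mod_cast hn
    have hp : (0:ℝ) < (16:ℝ)^n := by positivity
    nlinarith [hC]
  -- log-concavity:  V(m+2) V m ≤ V(m+1)^2 for m ≥ 1
  have lemMono : ∀ m : ℕ, 1 ≤ m → V (m+2) * V m ≤ V (m+1)^2 := by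
    intro m hm
    rcases Nat.lt_or_ge m 2 with h2 | h2
    · interval_cases m
      rw [hV1, hV2, hV3]; norm_num
    · have hc : (2:ℝ) ≤ (m:ℝ) := by exact_mod_cast h2
      set c : ℝ := (m:ℝ) with hcdef
      have hc0 : (0:ℝ) ≤ c := by linarith
      have ht := hVpos m
      have hx := hVpos (m+1)
      have h1 : 0 ≤ c*(c+1)^2*V (m+1) - 16*(c*(c+1)^2+1)*V m := by
        linarith [lemA m h2]
      have h2' : 0 ≤ 16*(c*(c+1)^2+1)*(8*(c+1)*(3*c^2+11*c+9))*V (m+1)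
          - 128*c*(c+2)^2*(16*(c*(c+1)^2+1)*V m + c*(c+1)^2*V (m+1)) := by
        linarith [mul_nonneg (show (0:ℝ) ≤ 128*c*(c+2)^2 by positivity) h1,
          mul_nonneg (show (0:ℝ) ≤ 2*(64*c^6+512*c^5+1600*c^4+2688*c^3+2816*c^2+1856*c+576) by positivity) hx.le]
      have hP2 : (0:ℝ) ≤ 512*c^5+2432*c^4+4480*c^3+4480*c^2+2944*c+1024 := by positivity
      have key : 0 ≤ 256*(c*(c+1)^2+1)^2 *
          (128*c*(c+2)^2*(V m)^2 - 8*(c+1)*(3*c^2+11*c+9)*(V m)*(V (m+1))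
            + (c+1)*(c+2)^2*(V (m+1))^2) := by
        linarith [mul_nonneg h1 h2', mul_nonneg hP2 (sq_nonneg (V (m+1)))]
      have key2 : 0 ≤ 128*c*(c+2)^2*(V m)^2 - 8*(c+1)*(3*c^2+11*c+9)*(V m)*(V (m+1))
            + (c+1)*(c+2)^2*(V (m+1))^2 := by
        nlinarith [key, show (0:ℝ) < 256*(c*(c+1)^2+1)^2 by positivity]
      have h3 : (c+1)*(c+2)^2*(V (m+2)*V m)
          = 8*(c+1)*(3*c^2+11*c+9)*(V (m+1))*(V m) - 128*c*(c+2)^2*(V m)^2 := by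
        linear_combination (V m) * (rec' m hm)
      have h6 : ((c+1)*(c+2)^2) * (V (m+2)*V m) ≤ ((c+1)*(c+2)^2) * ((V (m+1))^2) := by
        linarith [h3, key2]
      exact le_of_mul_le_mul_left h6 (by positivity : (0:ℝ) < (c+1)*(c+2)^2)
  -- main statement
  intro n hn
  obtain ⟨m, rfl⟩ : ∃ m, n = m + 1 := ⟨n - 1, by omega⟩
  have hm : 1 ≤ m := by omega
  have hmc : (1:ℝ) ≤ (m:ℝ) := by exact_mod_cast hm
  rw [show m + 1 - 1 = m from rfl, show m + 1 + 1 = m + 2 from rfl]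
  have e1 : ((m+1:ℕ):ℝ) - 1 = (m:ℝ) := by push_cast; ring
  have e2 : ((m+1:ℕ):ℝ) + 1 = (m:ℝ) + 2 := by push_cast; ring
  have e3 : ((m+1:ℕ):ℝ) = (m:ℝ) + 1 := by push_cast; ring
  rw [e1, e2, e3]
  -- positivity facts
  have hy := hVpos m
  have hx := hVpos (m+1)
  have hz := hVpos (m+2)
  have hc0 : (0:ℝ) < (m:ℝ) := by linarith
  have hc1 : (0:ℝ) < (m:ℝ)+1 := by linarith
  have hc2 : (0:ℝ) < (m:ℝ)+2 := by linarith
  -- the two key facts in log form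
  have hii : V m ^ (m+1) < V (m+1) ^ m := by
    calc V m ^ (m+1) = V m ^ m * V m := pow_succ _ _
    _ < V m ^ m * (16:ℝ)^m := by
        exact mul_lt_mul_of_pos_left (lemP m hm) (pow_pos hy m)
    _ = (16 * V m) ^ m := by rw [mul_pow]; ring
    _ < V (m+1) ^ m := by
        exact pow_lt_pow_left₀ (lem16 m hm) (by positivity) (by omega)
  have hB : ((m:ℝ)+1) * Real.log (V m) < (m:ℝ) * Real.log (V (m+1)) := by
    have := Real.log_lt_log (pow_pos hy (m+1)) hii
    rw [Real.log_pow, Real.log_pow] at this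
    push_cast at this
    linarith
  have hBC : Real.log (V (m+2)) + Real.log (V m) ≤ 2 * Real.log (V (m+1)) := by
    have := Real.log_le_log (mul_pos hz hy) (lemMono m hm)
    rw [Real.log_mul hz.ne' hy.ne', show V (m+1)^2 = V (m+1)^(2:ℕ) from rfl,
      Real.log_pow] at this
    push_cast at this
    linarith
  -- reduce goal to log inequality
  rw [gt_iff_lt, ← Real.log_lt_log_iff (by positivity) (Real.rpow_pos_of_pos hx _),
    Real.log_mul (by positivity) (by positivity),
    Real.log_rpow hy, Real.log_rpow hz, Real.log_rpow hx]
  have key : ((m:ℝ)+1)*((m:ℝ)+2) * Real.log (V m) + (m:ℝ)*((m:ℝ)+1) * Real.log (V (m+2))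
      < 2*(m:ℝ)*((m:ℝ)+2) * Real.log (V (m+1)) := by
    have hmul := mul_le_mul_of_nonneg_left hBC (by positivity : (0:ℝ) ≤ (m:ℝ)*((m:ℝ)+1))
    nlinarith [hB, hmul]
  rw [div_mul_eq_mul_div, div_mul_eq_mul_div, div_mul_eq_mul_div,
    div_add_div _ _ hc0.ne' hc2.ne', div_lt_div_iff₀ (by positivity) hc1]
  nlinarith [key]
end

section
/- Let f(n) = 16(n−1)/n for integers n ≥ 1. Then for every integer n ≥ 5, f(n−1) < P_n / P_{n-1} < f(n). -/
/-!
Write `r n = P n / P (n - 1)`. The recurrence says `r (n + 1) = ratioStep n (r n)`, where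
`ratioStep n` is strictly increasing on the positive reals, so the bounds
`16 (n - 2) / (n - 1) < r n < 16 (n - 1) / n` pass from `n` to `n + 1` once `ratioStep n` maps
the two bounds at `n` beyond the bounds at `n + 1`. It does, by explicit rational identities;
for the lower bound the margin has the sign of `n² - 4n - 4`, positive from `n = 5` on, where the
bounds are checked directly.
-/

open Set

noncomputable def ratioStep (n r : ℝ) : ℝ :=
  (8 * (3 * n ^ 2 + 3 * n + 1) - 128 * n ^ 2 / r) / (n + 1) ^ 2

theorem ratioStep_strictMonoOn {n : ℝ} (hn : 0 < n) : StrictMonoOn (ratioStep n) (Ioi 0) := by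
  intro r hr s hs hrs
  unfold ratioStep
  gcongr

theorem ratioStep_upper_lt {n : ℝ} (hn : 1 < n) :
    ratioStep n (16 * (n - 1) / n) < 16 * n / (n + 1) := by
  have hn1 : n - 1 ≠ 0 := by linarith
  have h : ratioStep n (16 * (n - 1) / n) = 16 * n / (n + 1) - 8 / ((n - 1) * (n + 1) ^ 2) := by
    unfold ratioStep
    field_simp
    ring
  rw [h, sub_lt_self_iff]
  have : 0 < n - 1 := by linarith
  positivity

theorem ratioStep_lower_gt {n : ℝ} (hn2 : 2 < n) (hn : 4 * n + 4 < n ^ 2) :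
    16 * (n - 1) / n < ratioStep n (16 * (n - 2) / (n - 1)) := by
  have hn1 : n - 1 ≠ 0 := by linarith
  have hn2' : n - 2 ≠ 0 := by linarith
  have h : ratioStep n (16 * (n - 2) / (n - 1))
      = 16 * (n - 1) / n + 8 * (n ^ 2 - 4 * n - 4) / (n * (n - 2) * (n + 1) ^ 2) := by
    unfold ratioStep
    field_simp
    ring
  rw [h, lt_add_iff_pos_right]
  have : 0 < n - 2 := by linarith
  have : 0 < n ^ 2 - 4 * n - 4 := by linarith
  positivity

theorem ratio_succ_eq_ratioStep {P : ℕ → ℝ} {n : ℕ} (hPn : P n ≠ 0)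
    (hrec : ((n : ℝ) + 1) ^ 2 * P (n + 1)
      = 8 * (3 * (n : ℝ) ^ 2 + 3 * (n : ℝ) + 1) * P n - 128 * (n : ℝ) ^ 2 * P (n - 1)) :
    P (n + 1) / P n = ratioStep n (P n / P (n - 1)) := by
  unfold ratioStep
  field_simp
  linarith

theorem P_four_five {P : ℕ → ℝ} (hP0 : P 0 = 1) (hP1 : P 1 = 8)
    (hPrec : ∀ n : ℕ, 1 ≤ n →
      ((n : ℝ) + 1) ^ 2 * P (n + 1)
        = 8 * (3 * (n : ℝ) ^ 2 + 3 * (n : ℝ) + 1) * P n - 128 * (n : ℝ) ^ 2 * P (n - 1)) :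
    P 4 = 10816 ∧ P 5 = 137728 := by
  have h1 := hPrec 1 le_rfl
  have h2 := hPrec 2 (by norm_num)
  have h3 := hPrec 3 (by norm_num)
  have h4 := hPrec 4 (by norm_num)
  norm_num [hP0, hP1] at h1 h2 h3 h4
  constructor <;> linarith

theorem Pn_ratio_bounds (P : ℕ → ℝ)
    (hP0 : P 0 = 1) (hP1 : P 1 = 8)
    (hPrec : ∀ n : ℕ, 1 ≤ n →
      ((n : ℝ) + 1) ^ 2 * P (n + 1)
        = 8 * (3 * (n : ℝ) ^ 2 + 3 * (n : ℝ) + 1) * P n - 128 * (n : ℝ) ^ 2 * P (n - 1))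
    (hPpos : ∀ n : ℕ, 0 < P n) :
    ∀ n : ℕ, 5 ≤ n →
      16 * ((n : ℝ) - 2) / ((n : ℝ) - 1) < P n / P (n - 1) ∧
        P n / P (n - 1) < 16 * ((n : ℝ) - 1) / (n : ℝ) := by
  intro n hn
  induction n, hn using Nat.le_induction with
  | base =>
    obtain ⟨hP4, hP5⟩ := P_four_five hP0 hP1 hPrec
    norm_num [hP4, hP5]
  | succ n hn ih =>
    have hx : (5 : ℝ) ≤ n := by exact_mod_cast hn
    have hstep := ratio_succ_eq_ratioStep (hPpos n).ne' (hPrec n (by omega))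
    have hmono := ratioStep_strictMonoOn (n := n) (by linarith)
    have hr : P n / P (n - 1) ∈ Ioi 0 := div_pos (hPpos n) (hPpos (n - 1))
    have hlo : (16 * ((n : ℝ) - 2) / (n - 1)) ∈ Ioi 0 := by
      simp only [mem_Ioi]; apply div_pos <;> linarith
    have hhi : (16 * ((n : ℝ) - 1) / n) ∈ Ioi 0 := by
      simp only [mem_Ioi]; apply div_pos <;> linarith
    rw [Nat.add_sub_cancel, hstep]
    push_cast
    constructor
    · calc 16 * ((n : ℝ) + 1 - 2) / (n + 1 - 1) = 16 * (n - 1) / n := by ring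
        _ < ratioStep n (16 * (n - 2) / (n - 1)) := ratioStep_lower_gt (by linarith) (by nlinarith)
        _ < ratioStep n (P n / P (n - 1)) := hmono hlo hr ih.1
    · calc ratioStep n (P n / P (n - 1)) < ratioStep n (16 * (n - 1) / n) := hmono hr hhi ih.2
        _ < 16 * n / (n + 1) := ratioStep_upper_lt (by linarith)
        _ = 16 * ((n : ℝ) + 1 - 1) / (n + 1) := by ring
end

section
/- Let h(n) = 16(n^3 − n^2 + 1)/(n^3 − n^2) for integers n ≥ 2. Then for every integer n ≥ 11, V_n / V_{n-1} < h(n−1). -/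
set_option maxHeartbeats 1000000


theorem Vn_ratio_upper_bound (V : ℕ → ℝ)
    (hV0 : V 0 = 1) (hV1 : V 1 = 8)
    (hVrec : ∀ n : ℕ, 1 ≤ n →
      (n : ℝ) * ((n : ℝ) + 1) ^ 2 * V (n + 1)
        = 8 * (n : ℝ) * (3 * (n : ℝ) ^ 2 + 5 * (n : ℝ) + 1) * V n
          - 128 * ((n : ℝ) - 1) * ((n : ℝ) + 1) ^ 2 * V (n - 1))
    (hVpos : ∀ n : ℕ, 0 < V n) :
    ∀ n : ℕ, 11 ≤ n →
      V n / V (n - 1)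
        < 16 * (((n : ℝ) - 1) ^ 3 - ((n : ℝ) - 1) ^ 2 + 1)
            / (((n : ℝ) - 1) ^ 3 - ((n : ℝ) - 1) ^ 2) := by
  have h2 : V 2 = 144 := by
    have h := hVrec 1 (by norm_num); norm_num [hV0, hV1] at h; linarith
  have h3 : V 3 = 2432 := by
    have h := hVrec 2 (by norm_num); norm_num [hV1, h2] at h; linarith
  have h4 : V 4 = 40000 := by
    have h := hVrec 3 (by norm_num); norm_num [h2, h3] at h; linarith
  have h5 : V 5 = 649728 := by
    have h := hVrec 4 (by norm_num); norm_num [h3, h4] at h; linarith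
  have h6 : V 6 = 10486784 := by
    have h := hVrec 5 (by norm_num); norm_num [h4, h5] at h; linarith
  have h7 : V 7 = 168681472 := by
    have h := hVrec 6 (by norm_num); norm_num [h5, h6] at h; linarith
  have h8 : V 8 = 2708038656 := by
    have h := hVrec 7 (by norm_num); norm_num [h6, h7] at h; linarith
  have h9 : V 9 = 43425996800 := by
    have h := hVrec 8 (by norm_num); norm_num [h7, h8] at h; linarith
  have h10 : V 10 = 695894425600 := by
    have h := hVrec 9 (by norm_num); norm_num [h8, h9] at h; linarith
  have h11 : V 11 = 11146676797440 := by
    have h := hVrec 10 (by norm_num); norm_num [h9, h10] at h; linarith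
  have key : ∀ m : ℕ, 10 ≤ m →
      V (m + 1) * ((m : ℝ) ^ 3 - (m : ℝ) ^ 2)
        < 16 * ((m : ℝ) ^ 3 - (m : ℝ) ^ 2 + 1) * V m := by
    refine Nat.le_induction ?_ ?_
    · norm_num [h10, h11]
    · intro n hn IH
      have hx : (10 : ℝ) ≤ (n : ℝ) := by exact_mod_cast hn
      set x : ℝ := (n : ℝ) with hxdef
      have hrec := hVrec (n + 1) (by omega)
      have hsub : n + 1 - 1 = n := by omega
      rw [hsub] at hrec
      push_cast at hrec ⊢
      set a := V n with hadef
      set b := V (n + 1) with hbdef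
      set c := V (n + 1 + 1) with hcdef
      have ha : 0 < a := hVpos n
      have hb : 0 < b := hVpos (n + 1)
      have keyid : (16 * ((x+1)^3 - (x+1)^2 + 1) * b - c * ((x+1)^3 - (x+1)^2))
            * ((x+1) * (x+2)^2 * (x^3 - x^2 + 1))
          = b * (8*x^5 - 48*x^4 - 144*x^3 - 32*x^2 + 120*x + 64)
            + 8*x*(x+2)^2*((x+1)^3 - (x+1)^2)
              * (16 * (x^3 - x^2 + 1) * a - b * (x^3 - x^2)) := by
        linear_combination (-((x^3 - x^2 + 1) * ((x+1)^3 - (x+1)^2))) * hrec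
      have hP : 0 ≤ 8*x^5 - 48*x^4 - 144*x^3 - 32*x^2 + 120*x + 64 := by
        nlinarith [pow_nonneg (by linarith : (0:ℝ) ≤ x - 10) 5,
          pow_nonneg (by linarith : (0:ℝ) ≤ x - 10) 4,
          pow_nonneg (by linarith : (0:ℝ) ≤ x - 10) 3,
          pow_nonneg (by linarith : (0:ℝ) ≤ x - 10) 2]
      have hIH' : 0 < 16 * (x^3 - x^2 + 1) * a - b * (x^3 - x^2) := by linarith
      have hx0 : (0:ℝ) < x := by linarith
      have hpos2 : 0 < 8*x*(x+2)^2*((x+1)^3 - (x+1)^2) := by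
        have e : 8*x*(x+2)^2*((x+1)^3 - (x+1)^2) = 8*x*(x+2)^2*((x+1)^2*x) := by ring
        rw [e]; positivity
      have hden : 0 < (x+1) * (x+2)^2 * (x^3 - x^2 + 1) := by
        have e : (x+1) * (x+2)^2 * (x^3 - x^2 + 1)
            = (x+1) * (x+2)^2 * (x^2*(x-1) + 1) := by ring
        have h1 : 0 < x^2*(x-1) := mul_pos (by positivity) (by linarith)
        rw [e]
        have h2 : 0 < x^2*(x-1) + 1 := by linarith
        positivity
      have hprod : 0 < (16 * ((x+1)^3 - (x+1)^2 + 1) * b - c * ((x+1)^3 - (x+1)^2))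
            * ((x+1) * (x+2)^2 * (x^3 - x^2 + 1)) := by
        rw [keyid]
        have t1 := mul_nonneg hb.le hP
        have t2 := mul_pos hpos2 hIH'
        linarith
      have hA : 0 < 16 * ((x+1)^3 - (x+1)^2 + 1) * b - c * ((x+1)^3 - (x+1)^2) := by
        by_contra hcon
        push_neg at hcon
        have := mul_nonneg (neg_nonneg.mpr hcon) hden.le
        nlinarith [hprod]
      linarith
  intro n hn
  have hm := key (n - 1) (by omega)
  have hsub : n - 1 + 1 = n := by omega
  rw [hsub] at hm
  have hcast : ((n - 1 : ℕ) : ℝ) = (n : ℝ) - 1 := by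
    rw [Nat.cast_sub (by omega : 1 ≤ n)]; norm_num
  rw [hcast] at hm
  have hxn : (11 : ℝ) ≤ (n : ℝ) := by exact_mod_cast hn
  have hD : 0 < ((n : ℝ) - 1) ^ 3 - ((n : ℝ) - 1) ^ 2 := by nlinarith
  rw [div_lt_div_iff₀ (hVpos (n - 1)) hD]
  linarith
end

section
/- The sequence {P_n^(1/n)}_{n≥1} is strictly increasing, i.e., for every integer n ≥ 1, (P_n)^(1/n) < (P_{n+1})^(1/(n+1)). -/
/-!
The ratio bounds `8 ≤ P (n+1) / P n ≤ 16 (n+1) / (n+2)` propagate along the recurrence, and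
inside this window the recurrence forces strict log-convexity `P (n+1) ^ 2 < P n * P (n+2)`.
Since `P 0 = 1`, log-convexity gives `P n ^ (n+1) < P (n+1) ^ n` by induction, which is the claim
after taking `n (n+1)`-th roots.
-/

/-- The recurrence taken at index `n + 1`, so that no natural subtraction occurs. -/
def CLFRecurrence (P : ℕ → ℝ) : Prop :=
  ∀ n : ℕ, ((n : ℝ) + 2) ^ 2 * P (n + 2)
    = 8 * (3 * ((n : ℝ) + 1) ^ 2 + 3 * ((n : ℝ) + 1) + 1) * P (n + 1)
      - 128 * ((n : ℝ) + 1) ^ 2 * P n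

namespace CLFRecurrence

variable {P : ℕ → ℝ}

theorem eight_mul_le_succ (h : CLFRecurrence P) {n : ℕ} (hn : 0 ≤ P n)
    (hlow : 8 * P n ≤ P (n + 1)) : 8 * P (n + 1) ≤ P (n + 2) := by
  refine le_of_mul_le_mul_left ?_ (by positivity : (0 : ℝ) < (n + 2) ^ 2)
  linear_combination -h n + 8 * (n + 1 : ℝ) * (2 * n + 3) * hlow + 64 * (n + 1 : ℝ) * hn

theorem succ_mul_le_succ (h : CLFRecurrence P) {n : ℕ} (hn : 0 ≤ P n)
    (hup : ((n : ℝ) + 2) * P (n + 1) ≤ 16 * ((n : ℝ) + 1) * P n) :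
    ((n : ℝ) + 3) * P (n + 2) ≤ 16 * ((n : ℝ) + 2) * P (n + 1) := by
  have hmid : (n ^ 2 + 5 * n + 5) * P (n + 1) ≤ 16 * (n + 1) * (n + 3) * P n := by
    refine le_of_mul_le_mul_left ?_ (by positivity : (0 : ℝ) < n + 2)
    linear_combination (n ^ 2 + 5 * n + 5 : ℝ) * hup + 16 * (n + 1 : ℝ) * hn
  refine le_of_mul_le_mul_left ?_ (by positivity : (0 : ℝ) < (n + 2) ^ 2)
  linear_combination (n + 3) * h n + 8 * (n + 1) * hmid

theorem ratio_bounds (h : CLFRecurrence P) (h0 : P 0 = 1) (h1 : P 1 = 8) (n : ℕ) :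
    0 < P n ∧ 8 * P n ≤ P (n + 1) ∧
      ((n : ℝ) + 2) * P (n + 1) ≤ 16 * ((n : ℝ) + 1) * P n := by
  induction n with
  | zero => norm_num [h0, h1]
  | succ n ih =>
    obtain ⟨hpos, hlow, hup⟩ := ih
    refine ⟨by linarith, h.eight_mul_le_succ hpos.le hlow, ?_⟩
    have := h.succ_mul_le_succ hpos.le hup
    push_cast
    linarith

/-- With `m = n + 1`, `x = P (n+1)`, `y = P n`, the recurrence turns `(m+1)² (y P (n+2) - x²)`
into `(m+1) (x - 8y) (16 m y - (m+1) x) + 8 m y (16 y - x)`, positive inside the window. -/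
theorem sq_lt_mul (h : CLFRecurrence P) {n : ℕ} (hn : 0 < P n)
    (hlow : 8 * P n ≤ P (n + 1))
    (hup : ((n : ℝ) + 2) * P (n + 1) ≤ 16 * ((n : ℝ) + 1) * P n) :
    P (n + 1) ^ 2 < P n * P (n + 2) := by
  have hlt : P (n + 1) < 16 * P n := by
    refine lt_of_mul_lt_mul_left ?_ (by positivity : (0 : ℝ) ≤ n + 2)
    linear_combination hup + 16 * hn
  have hwindow := mul_nonneg (sub_nonneg.2 hlow) (sub_nonneg.2 hup)
  refine lt_of_mul_lt_mul_left ?_ (by positivity : (0 : ℝ) ≤ (n + 2) ^ 2)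
  linear_combination -P n * h n + (n + 2 : ℝ) * hwindow
    + 8 * (n + 1 : ℝ) * mul_pos hn (sub_pos.2 hlt)

end CLFRecurrence

theorem pow_succ_lt_pow_of_sq_lt_mul {R : Type*} [CommSemiring R] [LinearOrder R]
    [IsStrictOrderedRing R] [ExistsAddOfLE R] {a : ℕ → R} (hpos : ∀ n, 0 < a n) (h0 : a 0 = 1)
    (hconv : ∀ n, a (n + 1) ^ 2 < a n * a (n + 2)) (n : ℕ) :
    a (n + 1) ^ (n + 2) < a (n + 2) ^ (n + 1) := by
  induction n with
  | zero => simpa [h0] using hconv 0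
  | succ n ih =>
    refine lt_of_mul_lt_mul_left ?_ (pow_nonneg (hpos (n + 2)).le (n + 1))
    calc a (n + 2) ^ (n + 1) * a (n + 2) ^ (n + 3) = (a (n + 2) ^ 2) ^ (n + 2) := by ring
      _ < (a (n + 1) * a (n + 3)) ^ (n + 2) :=
        pow_lt_pow_left₀ (hconv (n + 1)) (sq_nonneg _) (by omega)
      _ = a (n + 1) ^ (n + 2) * a (n + 3) ^ (n + 2) := mul_pow _ _ _
      _ < a (n + 2) ^ (n + 1) * a (n + 3) ^ (n + 2) :=
        mul_lt_mul_of_pos_right ih (pow_pos (hpos _) _)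

theorem Real.rpow_one_div_lt_of_pow_succ_lt_pow {x y : ℝ} {n : ℕ} (hx : 0 ≤ x) (hy : 0 ≤ y)
    (hn : n ≠ 0) (h : x ^ (n + 1) < y ^ n) :
    x ^ ((1 : ℝ) / (n : ℝ)) < y ^ ((1 : ℝ) / ((n : ℝ) + 1)) := by
  refine lt_of_pow_lt_pow_left₀ (n * (n + 1)) (by positivity) ?_
  have hx' : (x ^ ((1 : ℝ) / n)) ^ n = x := by
    rw [one_div, Real.rpow_inv_natCast_pow hx hn]
  have hy' : (y ^ ((1 : ℝ) / ((n : ℝ) + 1))) ^ (n + 1) = y := by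
    rw [one_div, ← Nat.cast_add_one, Real.rpow_inv_natCast_pow hy n.succ_ne_zero]
  rwa [pow_mul, hx', mul_comm, pow_mul, hy']

theorem Pn_root_strict_mono_general (P : ℕ → ℝ)
    (hP0 : P 0 = 1) (hP1 : P 1 = 8)
    (hPrec : ∀ n : ℕ, 1 ≤ n →
      ((n : ℝ) + 1) ^ 2 * P (n + 1)
        = 8 * (3 * (n : ℝ) ^ 2 + 3 * (n : ℝ) + 1) * P n - 128 * (n : ℝ) ^ 2 * P (n - 1)) :
    ∀ n : ℕ, 1 ≤ n →
      P n ^ ((1 : ℝ) / (n : ℝ)) < P (n + 1) ^ ((1 : ℝ) / ((n : ℝ) + 1)) := by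
  have hrec : CLFRecurrence P := fun n => by
    have := hPrec (n + 1) n.succ_pos
    rw [Nat.add_sub_cancel] at this
    push_cast at this
    linarith
  have hbounds := hrec.ratio_bounds hP0 hP1
  have hpos n := (hbounds n).1
  intro n hn
  obtain ⟨k, rfl⟩ := Nat.exists_eq_add_of_le' hn
  refine Real.rpow_one_div_lt_of_pow_succ_lt_pow (hpos _).le (hpos _).le k.succ_ne_zero ?_
  exact pow_succ_lt_pow_of_sq_lt_mul hpos hP0
    (fun n => hrec.sq_lt_mul (hbounds n).1 (hbounds n).2.1 (hbounds n).2.2) k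

theorem Pn_root_strict_mono (P : ℕ → ℝ)
    (hP0 : P 0 = 1) (hP1 : P 1 = 8)
    (hPrec : ∀ n : ℕ, 1 ≤ n →
      ((n : ℝ) + 1) ^ 2 * P (n + 1)
        = 8 * (3 * (n : ℝ) ^ 2 + 3 * (n : ℝ) + 1) * P n - 128 * (n : ℝ) ^ 2 * P (n - 1))
    (hPpos : ∀ n : ℕ, 0 < P n) :
    ∀ n : ℕ, 1 ≤ n →
      P n ^ ((1 : ℝ) / (n : ℝ)) < P (n + 1) ^ ((1 : ℝ) / ((n : ℝ) + 1)) :=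
  Pn_root_strict_mono_general P hP0 hP1 hPrec
end

section
/- The sequence {V_n^(1/n)}_{n≥1} is strictly increasing, i.e., for every integer n ≥ 1, (V_n)^(1/n) < (V_{n+1})^(1/(n+1)). -/
set_option maxHeartbeats 1000000

theorem Vn_root_strict_mono (V : ℕ → ℝ)
    (hV0 : V 0 = 1) (hV1 : V 1 = 8)
    (hVrec : ∀ n : ℕ, 1 ≤ n →
      (n : ℝ) * ((n : ℝ) + 1) ^ 2 * V (n + 1)
        = 8 * (n : ℝ) * (3 * (n : ℝ) ^ 2 + 5 * (n : ℝ) + 1) * V n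
          - 128 * ((n : ℝ) - 1) * ((n : ℝ) + 1) ^ 2 * V (n - 1))
    (hVpos : ∀ n : ℕ, 0 < V n) :
    ∀ n : ℕ, 1 ≤ n →
      V n ^ ((1 : ℝ) / (n : ℝ)) < V (n + 1) ^ ((1 : ℝ) / ((n : ℝ) + 1)) := by
  -- specialized recurrence
  have hrec : ∀ m : ℕ, 1 ≤ m →
      ((m : ℝ)) * ((m : ℝ) + 1) ^ 2 * V (m + 1)
        = 8 * (m : ℝ) * (3 * (m : ℝ) ^ 2 + 5 * (m : ℝ) + 1) * V m
          - 128 * ((m : ℝ) - 1) * ((m : ℝ) + 1) ^ 2 * V (m - 1) := hVrec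
  have hV2 : V 2 = 144 := by
    have h := hVrec 1 le_rfl
    norm_num [hV0, hV1] at h
    linarith
  have hV3 : V 3 = 2432 := by
    have h := hVrec 2 (by norm_num)
    norm_num [hV1, hV2] at h
    linarith
  -- Lemma A : 16 V n < V (n+1) for n ≥ 1
  have hA : ∀ n : ℕ, 1 ≤ n → 16 * V n < V (n + 1) := by
    intro n hn
    induction n, hn using Nat.le_induction with
    | base => rw [hV1, hV2]; norm_num
    | succ m hm ih =>
      have h := hVrec (m + 1) (by omega)
      rw [Nat.add_sub_cancel] at h
      push_cast at h
      have ihm := ih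
      have hm1 : (1 : ℝ) ≤ (m : ℝ) := by exact_mod_cast hm
      have hp1 := hVpos m
      have hp2 := hVpos (m + 1)
      have hp3 := hVpos (m + 2)
      have hfac : (0:ℝ) < ((m:ℝ)+1)*((m:ℝ)+2)^2 := by positivity
      have key : 0 < ((m:ℝ)+1)*((m:ℝ)+2)^2 * (V (m+2) - 16 * V (m+1)) := by
        nlinarith [h, hp2,
          mul_lt_mul_of_pos_left ihm (by positivity : (0:ℝ) < 8 * (m:ℝ) * ((m:ℝ)+2)^2)]
      have : V (m + 1 + 1) = V (m + 2) := by norm_num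
      rw [this]
      nlinarith [key, hfac]
  -- Lemma C : n(n+1) V(n+1) ≤ (16 n(n+1)+6) V n for n ≥ 1
  have hC : ∀ n : ℕ, 1 ≤ n →
      (n : ℝ) * ((n : ℝ) + 1) * V (n + 1) ≤ (16 * (n : ℝ) * ((n : ℝ) + 1) + 6) * V n := by
    intro n hn
    induction n, hn using Nat.le_induction with
    | base => rw [hV1, hV2]; norm_num
    | succ m hm ih =>
      rcases Nat.eq_or_lt_of_le hm with h1 | h2
      · have hm1 : m = 1 := h1.symm
        subst hm1
        norm_num [hV2, hV3]
      · have hm2 : 2 ≤ m := h2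
        have h := hVrec (m + 1) (by omega)
        rw [Nat.add_sub_cancel] at h
        push_cast at h
        have ihm := ih
        have hm1 : (2 : ℝ) ≤ (m : ℝ) := by exact_mod_cast hm2
        have hp1 := hVpos m
        have hp2 := hVpos (m + 1)
        have hp3 := hVpos (m + 2)
        push_cast
        have hfac : (0:ℝ) < ((m:ℝ)+2)*(16*(m:ℝ)*((m:ℝ)+1)+6) := by positivity
        have hpoly : ((16*(m:ℝ)*((m:ℝ)+1)+6) * (8*((m:ℝ)+1)*(3*(m:ℝ)^2+11*(m:ℝ)+9))
              - 128*(m:ℝ)^2*((m:ℝ)+1)*((m:ℝ)+2)^2)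
            ≤ ((m:ℝ)+2)*(16*(m:ℝ)*((m:ℝ)+1)+6)*(16*((m:ℝ)+1)*((m:ℝ)+2)+6) := by
          nlinarith [hm1, sq_nonneg ((m:ℝ)-2)]
        have key : ((m:ℝ)+2)*(16*(m:ℝ)*((m:ℝ)+1)+6) * (((m:ℝ)+1)*((m:ℝ)+2) * V (m+2))
            ≤ ((m:ℝ)+2)*(16*(m:ℝ)*((m:ℝ)+1)+6)*(16*((m:ℝ)+1)*((m:ℝ)+2)+6) * V (m+1) := by
          nlinarith [h, hp2,
            mul_le_mul_of_nonneg_left ihm (by positivity : (0:ℝ) ≤ 128 * (m:ℝ) * ((m:ℝ)+2)^2),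
            mul_le_mul_of_nonneg_right hpoly hp2.le]
        nlinarith [key, hfac]
  -- Lemma B : 2 n V n ≤ (2n-1) 16^n for n ≥ 1
  have hB : ∀ n : ℕ, 1 ≤ n → 2 * (n : ℝ) * V n ≤ (2 * (n : ℝ) - 1) * 16 ^ n := by
    intro n hn
    induction n, hn using Nat.le_induction with
    | base => rw [hV1]; norm_num
    | succ m hm ih =>
      have hCm := hC m hm
      have hm1 : (1 : ℝ) ≤ (m : ℝ) := by exact_mod_cast hm
      have hp1 := hVpos m
      have hp2 := hVpos (m + 1)
      have hx : (0:ℝ) < (16:ℝ) ^ m := by positivity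
      have hfac : (0:ℝ) < 4 * (m:ℝ)^2 * ((m:ℝ)+1) := by positivity
      have hpoly : (2*((m:ℝ)+1)*(16*(m:ℝ)*((m:ℝ)+1)+6)*(2*(m:ℝ)-1))
          ≤ 4*(m:ℝ)^2*((m:ℝ)+1)*(2*((m:ℝ)+1)-1)*16 := by nlinarith [hm1]
      have key : 4*(m:ℝ)^2*((m:ℝ)+1) * (2*((m:ℝ)+1) * V (m+1))
          ≤ 4*(m:ℝ)^2*((m:ℝ)+1) * ((2*((m:ℝ)+1)-1) * 16 * 16^m) := by
        nlinarith [mul_le_mul_of_nonneg_left hCm (by positivity : (0:ℝ) ≤ 4*(m:ℝ)*((m:ℝ)+1)),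
          mul_le_mul_of_nonneg_left ih (by positivity : (0:ℝ) ≤ 2*((m:ℝ)+1)*(16*(m:ℝ)*((m:ℝ)+1)+6)),
          mul_le_mul_of_nonneg_right hpoly hx.le]
      have hle : 2*((m:ℝ)+1) * V (m+1) ≤ (2*((m:ℝ)+1)-1) * 16 * 16^m :=
        le_of_mul_le_mul_left key hfac
      push_cast
      calc 2*((m:ℝ)+1) * V (m+1) ≤ (2*((m:ℝ)+1)-1) * 16 * 16^m := hle
        _ = (2*((m:ℝ)+1)-1) * 16^(m+1) := by rw [pow_succ]; ring
  -- strict bound V n < 16^n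
  have hBs : ∀ n : ℕ, 1 ≤ n → V n < 16 ^ n := by
    intro n hn
    have h := hB n hn
    have hn1 : (1 : ℝ) ≤ (n : ℝ) := by exact_mod_cast hn
    have hx : (0:ℝ) < (16:ℝ) ^ n := by positivity
    nlinarith [hVpos n]
  -- final
  intro n hn
  have ha := hVpos n
  have hb := hVpos (n + 1)
  have hn1 : (1 : ℝ) ≤ (n : ℝ) := by exact_mod_cast hn
  have hn0 : (n : ℝ) ≠ 0 := by linarith
  have hn0' : (n : ℝ) + 1 ≠ 0 := by linarith
  have key : V n ^ (n + 1) < V (n + 1) ^ n := by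
    calc V n ^ (n + 1) = V n ^ n * V n := pow_succ _ _
      _ < V n ^ n * 16 ^ n := by
          exact mul_lt_mul_of_pos_left (hBs n hn) (pow_pos ha n)
      _ = (16 * V n) ^ n := by rw [mul_pow]; ring
      _ < V (n + 1) ^ n := by
          exact pow_lt_pow_left₀ (hA n hn) (by positivity) (by omega)
  have e1 : V n ^ ((1:ℝ)/(n:ℝ)) = (V n ^ (n + 1)) ^ ((1:ℝ)/((n:ℝ)*((n:ℝ)+1))) := by
    rw [← Real.rpow_natCast (V n) (n + 1), ← Real.rpow_mul ha.le]
    congr 1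
    push_cast
    field_simp
  have e2 : V (n+1) ^ ((1:ℝ)/((n:ℝ)+1)) = (V (n+1) ^ n) ^ ((1:ℝ)/((n:ℝ)*((n:ℝ)+1))) := by
    rw [← Real.rpow_natCast (V (n+1)) n, ← Real.rpow_mul hb.le]
    congr 1
    field_simp
  rw [e1, e2]
  exact Real.rpow_lt_rpow (by positivity) key (by positivity)
end

section
/- The sequence l_n = P_n / 16^n is strictly decreasing for n ≥ 5, i.e., for every integer n ≥ 5, P_{n+1} / 16^(n+1) < P_n / 16^n. -/
theorem Pn_over_16n_strict_anti (P : ℕ → ℝ)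
    (hP0 : P 0 = 1) (hP1 : P 1 = 8)
    (hPrec : ∀ n : ℕ, 1 ≤ n →
      ((n : ℝ) + 1) ^ 2 * P (n + 1)
        = 8 * (3 * (n : ℝ) ^ 2 + 3 * (n : ℝ) + 1) * P n - 128 * (n : ℝ) ^ 2 * P (n - 1))
    (hPpos : ∀ n : ℕ, 0 < P n) :
    ∀ n : ℕ, 5 ≤ n → P (n + 1) / 16 ^ (n + 1) < P n / 16 ^ n := by
  have key : ∀ n : ℕ, P (n + 1) < 16 * P n := by
    intro n
    induction n with
    | zero => rw [hP1, hP0]; norm_num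
    | succ m ih =>
      have hrec := hPrec (m + 1) (by omega)
      simp only [Nat.add_sub_cancel] at hrec
      push_cast at hrec
      have h1 := hPpos m
      have h2 := hPpos (m + 1)
      have hm : (0:ℝ) ≤ (m:ℝ) := Nat.cast_nonneg m
      nlinarith [sq_nonneg ((m:ℝ) + 2), mul_pos h2 (by positivity : (0:ℝ) < (m:ℝ)^2 + 1)]
  intro n _
  rw [div_lt_div_iff₀ (by positivity) (by positivity), pow_succ]
  have h16 : (0:ℝ) < 16 ^ n := by positivity
  nlinarith [key n]
end

section
/- The sequence r_n = ( (n−2)(n+1) / ((n−1)n) )^(n(n−1)/2) · ( (n−2)/(n−1) )^n is strictly increasing for n ≥ 5, i.e., for every integer n ≥ 5, r_n < r_{n+1}. -/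
/-!
Write `r_n = a_n ^ C(n,2) * b_n ^ n` with `a_n = (n-2)(n+1)/((n-1)n)` and `b_n = (n-2)/(n-1)`.
Shifting `n` gives `a_{n+1} = a_n (1 + c_n)` and `a_{n+1} b_{n+1} (1 + d_n) = b_n` for explicit
small `c_n ~ 4/n³` and `d_n ~ 1/n²`, hence
`r_{n+1} / r_n = (1 + c_n) ^ C(n,2) (n-1) / ((1 + d_n) ^ n n)`.
Bounding `(1 + c_n) ^ C(n,2)` from below by its first three binomial terms and `(1 + d_n) ^ n`
from above by `1 / (1 - n d_n)` reduces `r_n < r_{n+1}` to the positivity of a polynomial of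
degree nine, whose Taylor coefficients at `5` are all positive.
-/

section BinomialBounds

variable {R : Type*} [CommRing R] [PartialOrder R] [IsOrderedRing R]

theorem one_add_mul_add_choose_two_mul_sq_le_pow {c : R} (hc : 0 ≤ c) (m : ℕ) :
    1 + m * c + (m.choose 2 : R) * c ^ 2 ≤ (1 + c) ^ m := by
  induction m with
  | zero => simp
  | succ m ih =>
    calc 1 + ((m + 1 : ℕ) : R) * c + ((m + 1).choose 2 : R) * c ^ 2
        ≤ 1 + ((m + 1 : ℕ) : R) * c + ((m + 1).choose 2 : R) * c ^ 2 + (m.choose 2 : R) * c ^ 3 :=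
          le_add_of_nonneg_right (by positivity)
      _ = (1 + m * c + (m.choose 2 : R) * c ^ 2) * (1 + c) := by
          rw [Nat.choose_succ_succ', Nat.choose_one_right]; push_cast; ring
      _ ≤ (1 + c) ^ (m + 1) := by
          rw [pow_succ (1 + c)]; exact mul_le_mul_of_nonneg_right ih (add_nonneg zero_le_one hc)

theorem one_add_pow_mul_one_sub_mul_le_one {y : R} (hy : 0 ≤ y) (n : ℕ) :
    (1 + y) ^ n * (1 - n * y) ≤ 1 := by
  induction n with
  | zero => simp
  | succ n ih =>
    calc (1 + y) ^ (n + 1) * (1 - ((n + 1 : ℕ) : R) * y)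
        = (1 + y) ^ n * (1 - n * y) - (1 + y) ^ n * ((n + 1 : ℕ) * y ^ 2) := by
          push_cast; ring
      _ ≤ 1 := sub_le_iff_le_add.mpr (le_add_of_le_of_nonneg ih <|
          mul_nonneg (pow_nonneg (add_nonneg zero_le_one hy) n)
            (mul_nonneg (Nat.cast_nonneg _) (pow_nonneg hy 2)))

end BinomialBounds

namespace RnSeq

noncomputable def a (x : ℝ) : ℝ := (x - 2) * (x + 1) / ((x - 1) * x)

noncomputable def b (x : ℝ) : ℝ := (x - 2) / (x - 1)

noncomputable def c (x : ℝ) : ℝ := 4 / ((x + 1) ^ 2 * (x - 2))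

noncomputable def d (x : ℝ) : ℝ := (x ^ 2 - 5 * x + 2) / ((x - 1) ^ 3 * (x + 2))

variable {x : ℝ}

theorem a_pos (hx : 2 < x) : 0 < a x := by
  unfold a; apply div_pos <;> nlinarith

theorem b_pos (hx : 2 < x) : 0 < b x := by
  unfold b; apply div_pos <;> linarith

theorem c_pos (hx : 2 < x) : 0 < c x := by
  have : 0 < x - 2 := by linarith
  unfold c; positivity

theorem d_nonneg (hx : 5 ≤ x) : 0 ≤ d x := by
  have : 0 < x - 1 := by linarith
  unfold d
  apply div_nonneg
  · nlinarith
  · positivity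

theorem mul_d_lt_one (hx : 5 ≤ x) : x * d x < 1 := by
  have : 0 < x - 1 := by linarith
  unfold d
  rw [mul_div_assoc', div_lt_one (by positivity)]
  nlinarith [mul_pos (pow_pos (by linarith : (0 : ℝ) < x) 3) (by linarith : (0 : ℝ) < x - 2)]

theorem a_add_one (hx : 2 < x) : a (x + 1) = a x * (1 + c x) := by
  simp only [a, c, add_sub_cancel_right]
  have : x - 2 ≠ 0 := by linarith
  have : x - 1 ≠ 0 := by linarith
  have : x + 1 ≠ 0 := by linarith
  have : x ≠ 0 := by linarith
  field_simp; ring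

theorem a_mul_b_add_one (hx : 2 < x) : a (x + 1) * b (x + 1) * (1 + d x) = b x := by
  simp only [a, b, d, add_sub_cancel_right]
  have : x - 2 ≠ 0 := by linarith
  have : x - 1 ≠ 0 := by linarith
  have : x + 1 ≠ 0 := by linarith
  have : x + 2 ≠ 0 := by linarith
  have : x ≠ 0 := by linarith
  field_simp; ring

theorem b_add_one_mul (hx : 2 < x) : b (x + 1) * x = x - 1 := by
  have : x ≠ 0 := by linarith
  rw [b, add_sub_cancel_right]; field_simp; ring

theorem pow_a_add_one_mul_pow_b_add_one (hx : 2 < x) (k m : ℕ) :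
    a (x + 1) ^ (k + m) * b (x + 1) ^ (m + 1) * ((1 + d x) ^ m * x) =
      a x ^ k * b x ^ m * ((1 + c x) ^ k * (x - 1)) := by
  calc a (x + 1) ^ (k + m) * b (x + 1) ^ (m + 1) * ((1 + d x) ^ m * x)
      = a (x + 1) ^ k * (a (x + 1) * b (x + 1) * (1 + d x)) ^ m * (b (x + 1) * x) := by
        rw [mul_pow, mul_pow]; ring
    _ = (a x * (1 + c x)) ^ k * b x ^ m * (x - 1) := by
        rw [a_mul_b_add_one hx, b_add_one_mul hx, a_add_one hx]
    _ = a x ^ k * b x ^ m * ((1 + c x) ^ k * (x - 1)) := by rw [mul_pow]; ring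

theorem self_lt_truncated_binomial_mul (hx : 5 ≤ x) :
    x < (1 + x * (x - 1) / 2 * c x + (x * (x - 1) / 2 * (x * (x - 1) / 2 - 1) / 2) * c x ^ 2)
      * (x - 1) * (1 - x * d x) := by
  have hP : 0 < 8 + 28 * x - 74 * x ^ 2 - 67 * x ^ 3 + 122 * x ^ 4 + 43 * x ^ 5 - 62 * x ^ 6
      - 5 * x ^ 7 + 6 * x ^ 8 + x ^ 9 := by
    obtain ⟨t, ht, rfl⟩ : ∃ t, 0 ≤ t ∧ x = t + 5 := ⟨x - 5, by linarith, by ring⟩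
    have : 0 < 3138048 + 5745888 * t + 4599096 * t ^ 2 + 2111248 * t ^ 3 + 612322 * t ^ 4
        + 116308 * t ^ 5 + 14463 * t ^ 6 + 1135 * t ^ 7 + 51 * t ^ 8 + t ^ 9 := by positivity
    linarith
  have hD : 0 < ((x + 1) ^ 2 * (x - 2)) ^ 2 * ((x - 1) ^ 3 * (x + 2)) := by
    have : 0 < x - 2 := by linarith
    have : 0 < x - 1 := by linarith
    positivity
  have : x - 2 ≠ 0 := by linarith
  have : x - 1 ≠ 0 := by linarith
  have : x + 1 ≠ 0 := by linarith
  have : x + 2 ≠ 0 := by linarith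
  have hdiff : (1 + x * (x - 1) / 2 * c x + (x * (x - 1) / 2 * (x * (x - 1) / 2 - 1) / 2) * c x ^ 2)
      * (x - 1) * (1 - x * d x) - x = (8 + 28 * x - 74 * x ^ 2 - 67 * x ^ 3 + 122 * x ^ 4
        + 43 * x ^ 5 - 62 * x ^ 6 - 5 * x ^ 7 + 6 * x ^ 8 + x ^ 9)
        / (((x + 1) ^ 2 * (x - 2)) ^ 2 * ((x - 1) ^ 3 * (x + 2))) := by
    simp only [c, d]; field_simp; ring
  rw [← sub_pos, hdiff]
  exact div_pos hP hD

theorem one_add_d_pow_mul_lt {n : ℕ} (hn : 5 ≤ n) :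
    (1 + d n) ^ n * n < (1 + c n) ^ n.choose 2 * (n - 1) := by
  have hx : (5 : ℝ) ≤ n := by exact_mod_cast hn
  have hxd : 0 < 1 - n * d n := sub_pos.mpr (mul_d_lt_one hx)
  have hk : (n.choose 2 : ℝ) = n * (n - 1) / 2 := Nat.cast_choose_two ℝ n
  calc (1 + d n) ^ n * n
      ≤ n / (1 - n * d n) := by
        rw [le_div_iff₀ hxd, mul_right_comm]
        exact mul_le_of_le_one_left (by positivity) <|
          one_add_pow_mul_one_sub_mul_le_one (d_nonneg hx) n
    _ < (1 + n.choose 2 * c n + ((n.choose 2).choose 2 : ℝ) * c n ^ 2) * (n - 1) := by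
        rw [div_lt_iff₀ hxd, Nat.cast_choose_two ℝ (n.choose 2), hk]
        exact self_lt_truncated_binomial_mul hx
    _ ≤ (1 + c n) ^ n.choose 2 * (n - 1) :=
        mul_le_mul_of_nonneg_right
          (one_add_mul_add_choose_two_mul_sq_le_pow (c_pos (by linarith)).le _) (by linarith)

end RnSeq

theorem rn_strict_mono :
    ∀ n : ℕ, 5 ≤ n →
      (((n : ℝ) - 2) * ((n : ℝ) + 1) / (((n : ℝ) - 1) * (n : ℝ))) ^ (n * (n - 1) / 2)
          * (((n : ℝ) - 2) / ((n : ℝ) - 1)) ^ n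
        < (((n : ℝ) + 1 - 2) * ((n : ℝ) + 1 + 1) / (((n : ℝ) + 1 - 1) * ((n : ℝ) + 1)))
              ^ ((n + 1) * n / 2)
            * (((n : ℝ) + 1 - 2) / ((n : ℝ) + 1 - 1)) ^ (n + 1) := by
  intro n hn
  have hx : (2 : ℝ) < n := by norm_cast; omega
  rw [show (n + 1) * n / 2 = n * (n - 1) / 2 + n from Nat.triangle_succ n, ← Nat.choose_two_right]
  change RnSeq.a n ^ n.choose 2 * RnSeq.b n ^ n
    < RnSeq.a (n + 1) ^ (n.choose 2 + n) * RnSeq.b (n + 1) ^ (n + 1)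
  have hd : 0 < (1 + RnSeq.d n) ^ n * n := by
    have := RnSeq.d_nonneg (x := n) (by exact_mod_cast hn)
    positivity
  refine lt_of_mul_lt_mul_right ?_ hd.le
  rw [RnSeq.pow_a_add_one_mul_pow_b_add_one hx]
  have := RnSeq.a_pos hx
  have := RnSeq.b_pos hx
  exact mul_lt_mul_of_pos_left (RnSeq.one_add_d_pow_mul_lt hn) (by positivity)
end

section
/- For every integer n ≥ 2, (V_n / V_{n-1})^(n(n+1)) > V_n^2 · (V_{n+1} / V_n)^(n(n-1)). -/
noncomputable def lff (x : ℝ) : ℝ := (16*x^5+16*x^2+48*x+150)/x^5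
noncomputable def uff (x : ℝ) : ℝ := (16*x^5+16*x^2+48*x+410)/x^5

lemma loglb {x : ℝ} (hx : 0 < x) : 1 - 1/x ≤ Real.log x := by
  have h := Real.log_le_sub_one_of_pos (show (0:ℝ) < x⁻¹ by positivity)
  rw [Real.log_inv] at h
  rw [one_div]
  linarith

lemma lff_ge {x : ℝ} (hx : 11 ≤ x) : 16 ≤ lff x := by
  have hx0 : (0:ℝ) < x := by linarith
  have h5 : (0:ℝ) < x^5 := by positivity
  rw [lff, le_div_iff₀ h5]
  nlinarith [pow_pos hx0 2, hx0]

lemma lff_pos {x : ℝ} (hx : 11 ≤ x) : 0 < lff x := lt_of_lt_of_le (by norm_num) (lff_ge hx)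

lemma uff_pos {x : ℝ} (hx : 11 ≤ x) : 0 < uff x := by
  have hx0 : (0:ℝ) < x := by linarith
  have h5 : (0:ℝ) < x^5 := by positivity
  rw [uff]
  apply div_pos _ h5
  nlinarith [pow_pos hx0 5, pow_pos hx0 2, hx0]

lemma S1 {x : ℝ} (hx : 11 ≤ x) :
    128*(x-1)*(x+1)^2/(lff x) + lff (x+1) * (x*(x+1)^2) ≤ 8*x*(3*x^2+5*x+1) := by
  have hx0 : (0:ℝ) < x := by linarith
  have ht : (0:ℝ) ≤ x - 11 := by linarith
  have hN : (0:ℝ) ≤ -33300*x + -25056*x^2 + -9360*x^3 + 4080*x^4 + 6720*x^5 + 336*x^6 := by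
    nlinarith [pow_nonneg ht 2, pow_nonneg ht 3, pow_nonneg ht 4, pow_nonneg ht 5, pow_nonneg ht 6, ht]
  have hd1 : (0:ℝ) < 16*x^5+16*x^2+48*x+150 := by nlinarith [pow_pos hx0 5, pow_pos hx0 2, hx0]
  have hx5 : (0:ℝ) ≠ x^5 := by positivity
  have key : 8*x*(3*x^2+5*x+1) - (128*(x-1)*(x+1)^2/(lff x) + lff (x+1) * (x*(x+1)^2))
      = (-33300*x + -25056*x^2 + -9360*x^3 + 4080*x^4 + 6720*x^5 + 336*x^6) / ((16*x^5+16*x^2+48*x+150)*(x+1)^3) := by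
    rw [lff, lff]
    have h1 : x ≠ 0 := by linarith
    have h2 : x + 1 ≠ 0 := by linarith
    field_simp
    ring
  have hDpos : (0:ℝ) < (16*x^5+16*x^2+48*x+150)*(x+1)^3 := by positivity
  have h9 := div_nonneg hN hDpos.le
  linarith [key ▸ h9]

lemma S2 {x : ℝ} (hx : 11 ≤ x) :
    8*x*(3*x^2+5*x+1) ≤ 128*(x-1)*(x+1)^2/(uff x) + uff (x+1) * (x*(x+1)^2) := by
  have hx0 : (0:ℝ) < x := by linarith
  have ht : (0:ℝ) ≤ x - 11 := by linarith
  have hN : (0:ℝ) ≤ 197620*x + 62496*x^2 + 15600*x^3 + -14480*x^4 + -15040*x^5 + 1744*x^6 := by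
    nlinarith [pow_nonneg ht 2, pow_nonneg ht 3, pow_nonneg ht 4, pow_nonneg ht 5, pow_nonneg ht 6, ht]
  have key : 128*(x-1)*(x+1)^2/(uff x) + uff (x+1) * (x*(x+1)^2) - 8*x*(3*x^2+5*x+1)
      = (197620*x + 62496*x^2 + 15600*x^3 + -14480*x^4 + -15040*x^5 + 1744*x^6) / ((16*x^5+16*x^2+48*x+410)*(x+1)^3) := by
    rw [uff, uff]
    have h1 : x ≠ 0 := by linarith
    have h2 : x + 1 ≠ 0 := by linarith
    have hd1 : 16*x^5+16*x^2+48*x+410 ≠ 0 := by nlinarith [pow_pos hx0 5, pow_pos hx0 2, hx0]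
    field_simp
    ring
  have hDpos : (0:ℝ) < (16*x^5+16*x^2+48*x+410)*(x+1)^3 := by
    have : (0:ℝ) < 16*x^5+16*x^2+48*x+410 := by nlinarith [pow_pos hx0 5, pow_pos hx0 2, hx0]
    positivity
  have h9 := div_nonneg hN hDpos.le
  linarith [key ▸ h9]

lemma S3 {x : ℝ} (hx : 11 ≤ x) : 0 ≤ uff x * uff (x+2) - (lff (x+1))^2 := by
  have hx0 : (0:ℝ) < x := by linarith
  have ht : (0:ℝ) ≤ x - 11 := by linarith
  have hN : (0:ℝ) ≤ 443620 + 5058856*x + 26804948*x^2 + 87755680*x^3 + 199161736*x^4 + 331537712*x^5 + 420071432*x^6 + 414614368*x^7 + 321630580*x^8 + 195356480*x^9 + 91667840*x^10 + 32535616*x^11 + 8484928*x^12 + 1558720*x^13 + 186240*x^14 + 11392*x^15 := by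
    nlinarith [pow_nonneg ht 2, pow_nonneg ht 3, pow_nonneg ht 4, pow_nonneg ht 5, pow_nonneg ht 6,
      pow_nonneg ht 7, pow_nonneg ht 8, pow_nonneg ht 9, pow_nonneg ht 10, pow_nonneg ht 11,
      pow_nonneg ht 12, pow_nonneg ht 13, pow_nonneg ht 14, pow_nonneg ht 15, ht]
  have key : uff x * uff (x+2) - (lff (x+1))^2
      = (443620 + 5058856*x + 26804948*x^2 + 87755680*x^3 + 199161736*x^4 + 331537712*x^5 + 420071432*x^6 + 414614368*x^7 + 321630580*x^8 + 195356480*x^9 + 91667840*x^10 + 32535616*x^11 + 8484928*x^12 + 1558720*x^13 + 186240*x^14 + 11392*x^15) / (x^5*(x+2)^5*(x+1)^10) := by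
    rw [uff, uff, lff]
    have h1 : x ≠ 0 := by linarith
    have h2 : x + 1 ≠ 0 := by linarith
    have h3 : x + 2 ≠ 0 := by linarith
    field_simp
    ring
  have hDpos : (0:ℝ) < x^5*(x+2)^5*(x+1)^10 := by positivity
  rw [key]
  exact div_nonneg hN hDpos.le

lemma S4 {x : ℝ} (hx : 11 ≤ x) :
    x*(x+1)*(uff x * uff (x+2) - (lff (x+1))^2)/256 ≤ 23/(x-1)^2 - 23/x^2 := by
  have hx0 : (0:ℝ) < x := by linarith
  have hx1 : (0:ℝ) < x - 1 := by linarith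
  have ht : (0:ℝ) ≤ x - 11 := by linarith
  have hN : (0:ℝ) ≤ -443620*x^3 + -4615236*x^4 + -21490888*x^5 + -58313864*x^6 + -98609724*x^7 + -92857564*x^8 + 674576*x^9 + 163122000*x^10 + 321593028*x^11 + 400114316*x^12 + 368400852*x^13 + 260407564*x^14 + 142433856*x^15 + 60125248*x^16 + 19303232*x^17 + 4524160*x^18 + 699712*x^19 + 54784*x^20 + 384*x^21 := by
    nlinarith [pow_nonneg ht 2, pow_nonneg ht 3, pow_nonneg ht 4, pow_nonneg ht 5, pow_nonneg ht 6,
      pow_nonneg ht 7, pow_nonneg ht 8, pow_nonneg ht 9, pow_nonneg ht 10, pow_nonneg ht 11,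
      pow_nonneg ht 12, pow_nonneg ht 13, pow_nonneg ht 14, pow_nonneg ht 15, pow_nonneg ht 16,
      pow_nonneg ht 17, pow_nonneg ht 18, pow_nonneg ht 19, pow_nonneg ht 20, pow_nonneg ht 21, ht]
  have key : 23/(x-1)^2 - 23/x^2 - x*(x+1)*(uff x * uff (x+2) - (lff (x+1))^2)/256
      = (-443620*x^3 + -4615236*x^4 + -21490888*x^5 + -58313864*x^6 + -98609724*x^7 + -92857564*x^8 + 674576*x^9 + 163122000*x^10 + 321593028*x^11 + 400114316*x^12 + 368400852*x^13 + 260407564*x^14 + 142433856*x^15 + 60125248*x^16 + 19303232*x^17 + 4524160*x^18 + 699712*x^19 + 54784*x^20 + 384*x^21) / (256*(x-1)^2*x^7*(x+2)^5*(x+1)^10) := by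
    rw [uff, uff, lff]
    have h1 : x ≠ 0 := by linarith
    have h2 : x + 1 ≠ 0 := by linarith
    have h3 : x + 2 ≠ 0 := by linarith
    have h4 : x - 1 ≠ 0 := by linarith
    field_simp
    ring
  have hDpos : (0:ℝ) < 256*(x-1)^2*x^7*(x+2)^5*(x+1)^10 := by positivity
  have h9 := div_nonneg hN hDpos.le
  linarith [key ▸ h9]

set_option maxHeartbeats 1000000 in
theorem Vn_ratio_power_ineq (V : ℕ → ℝ)
    (hV0 : V 0 = 1) (hV1 : V 1 = 8)
    (hVrec : ∀ n : ℕ, 1 ≤ n →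
      (n : ℝ) * ((n : ℝ) + 1) ^ 2 * V (n + 1)
        = 8 * (n : ℝ) * (3 * (n : ℝ) ^ 2 + 5 * (n : ℝ) + 1) * V n
          - 128 * ((n : ℝ) - 1) * ((n : ℝ) + 1) ^ 2 * V (n - 1))
    (hVpos : ∀ n : ℕ, 0 < V n) :
    ∀ n : ℕ, 2 ≤ n →
      (V n / V (n - 1)) ^ (n * (n + 1)) > V n ^ 2 * (V (n + 1) / V n) ^ (n * (n - 1)) := by
  have v2 : V 2 = 144 := by
    have h := hVrec 1 (by norm_num)
    norm_num at h
    linarith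
  have v3 : V 3 = 2432 := by
    have h := hVrec 2 (by norm_num)
    norm_num at h
    linarith
  have v4 : V 4 = 40000 := by
    have h := hVrec 3 (by norm_num)
    norm_num at h
    linarith
  have v5 : V 5 = 649728 := by
    have h := hVrec 4 (by norm_num)
    norm_num at h
    linarith
  have v6 : V 6 = 10486784 := by
    have h := hVrec 5 (by norm_num)
    norm_num at h
    linarith
  have v7 : V 7 = 168681472 := by
    have h := hVrec 6 (by norm_num)
    norm_num at h
    linarith
  have v8 : V 8 = 2708038656 := by
    have h := hVrec 7 (by norm_num)
    norm_num at h
    linarith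
  have v9 : V 9 = 43425996800 := by
    have h := hVrec 8 (by norm_num)
    norm_num at h
    linarith
  have v10 : V 10 = 695894425600 := by
    have h := hVrec 9 (by norm_num)
    norm_num at h
    linarith
  have v11 : V 11 = 11146676797440 := by
    have h := hVrec 10 (by norm_num)
    norm_num at h
    linarith
  have v12 : V 12 = 178493059563520 := by
    have h := hVrec 11 (by norm_num)
    norm_num at h
    linarith

  -- sandwich
  have SW : ∀ k : ℕ, 10 ≤ k → lff ((k:ℝ)+1) ≤ V (k+1) / V k ∧ V (k+1) / V k ≤ uff ((k:ℝ)+1) := by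
    intro k hk
    induction k, hk using Nat.le_induction with
    | base =>
      rw [v11, v10]
      constructor
      · rw [show ((10:ℕ):ℝ)+1 = 11 by norm_num, lff]; norm_num
      · rw [show ((10:ℕ):ℝ)+1 = 11 by norm_num, uff]; norm_num
    | succ k hk ih =>
      obtain ⟨ihl, ihu⟩ := ih
      have pk := hVpos k
      have p1 := hVpos (k+1)
      have p2 := hVpos (k+2)
      set x : ℝ := (k:ℝ)+1 with hxdef
      clear_value x
      have hx : 11 ≤ x := by
        rw [hxdef]
        have h10 : (10:ℝ) ≤ (k:ℝ) := by exact_mod_cast hk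
        linarith only [h10]
      have hx0 : (0:ℝ) < x := by linarith only [hx]
      have hrec := hVrec (k+1) (by omega)
      have hcast : ((k+1:ℕ):ℝ) = x := by rw [hxdef]; push_cast; ring
      rw [show k+1-1 = k from rfl, show k+1+1 = k+2 from rfl] at hrec
      rw [hcast] at hrec
      have hlpos := lff_pos hx
      have hupos := uff_pos hx
      have hmul : (0:ℝ) < x*(x+1)^2 := by positivity
      have hcoef : (0:ℝ) ≤ 128*(x-1)*(x+1)^2 := by
        apply mul_nonneg (mul_nonneg (by norm_num) (by linarith only [hx])) (by positivity)
      have hgoalcast : ((k+1:ℕ):ℝ)+1 = x+1 := by rw [hcast]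
      rw [hgoalcast]
      constructor
      · rw [le_div_iff₀ p1]
        have hVk : 128*(x-1)*(x+1)^2 * V k ≤ (128*(x-1)*(x+1)^2/(lff x)) * V (k+1) := by
          have h1 : V k * lff x ≤ V (k+1) := by
            have h2 := (le_div_iff₀ pk).mp ihl
            linarith only [h2]
          rw [div_mul_eq_mul_div, le_div_iff₀ hlpos]
          calc 128*(x-1)*(x+1)^2 * V k * lff x
              = (128*(x-1)*(x+1)^2) * (V k * lff x) := by ring
            _ ≤ (128*(x-1)*(x+1)^2) * V (k+1) := mul_le_mul_of_nonneg_left h1 hcoef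
        have hS := mul_le_mul_of_nonneg_right (S1 hx) p1.le
        have hchain : lff (x+1) * V (k+1) * (x*(x+1)^2) ≤ V (k+2) * (x*(x+1)^2) := by
          linarith only [hrec, hVk, hS]
        have hfin := le_of_mul_le_mul_right hchain hmul
        linarith only [hfin]
      · rw [div_le_iff₀ p1]
        have hVk : (128*(x-1)*(x+1)^2/(uff x)) * V (k+1) ≤ 128*(x-1)*(x+1)^2 * V k := by
          have h1 : V (k+1) ≤ V k * uff x := by
            have h2 := (div_le_iff₀ pk).mp ihu
            linarith only [h2]
          rw [div_mul_eq_mul_div, div_le_iff₀ hupos]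
          calc 128*(x-1)*(x+1)^2 * V (k+1)
              ≤ (128*(x-1)*(x+1)^2) * (V k * uff x) := mul_le_mul_of_nonneg_left h1 hcoef
            _ = 128*(x-1)*(x+1)^2 * V k * uff x := by ring
        have hS := mul_le_mul_of_nonneg_right (S2 hx) p1.le
        have hchain : V (k+2) * (x*(x+1)^2) ≤ uff (x+1) * V (k+1) * (x*(x+1)^2) := by
          linarith only [hrec, hVk, hS]
        have hfin := le_of_mul_le_mul_right hchain hmul
        linarith only [hfin]
  -- the key logarithmic inequality, strengthened for induction
  have IND : ∀ j : ℕ, 9 ≤ j →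
      23/((j:ℝ)+1)^2 ≤ ((j:ℝ)+2)*((j:ℝ)+3)*Real.log (V (j+2)/V (j+1)) - 2*Real.log (V (j+2))
        - ((j:ℝ)+2)*((j:ℝ)+1)*Real.log (V (j+3)/V (j+2)) := by
    intro j hj
    induction j, hj using Nat.le_induction with
    | base =>
      push_cast
      norm_num
      have e1 : V 11 / V 10 = 16 * ((17008479:ℝ)/16989610) := by rw [v11, v10]; norm_num
      have e2 : V 12 / V 11 = 16 * ((544717589:ℝ)/544271328) := by rw [v12, v11]; norm_num
      have e3 : V 11 = (16:ℝ)^(11:ℕ) * ((85042395:ℝ)/134217728) := by rw [v11]; norm_num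
      rw [e1, e2, e3, Real.log_mul (by norm_num) (by norm_num), Real.log_mul (by norm_num) (by norm_num),
        Real.log_mul (by positivity) (by norm_num), Real.log_pow]
      have h1 : 1 - 1/((17008479:ℝ)/16989610) ≤ Real.log ((17008479:ℝ)/16989610) := loglb (by norm_num)
      have h2 : Real.log ((544717589:ℝ)/544271328) ≤ ((544717589:ℝ)/544271328) - 1 := Real.log_le_sub_one_of_pos (by norm_num)
      have h3 : Real.log ((85042395:ℝ)/134217728) ≤ ((85042395:ℝ)/134217728) - 1 := Real.log_le_sub_one_of_pos (by norm_num)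
      push_cast
      linarith only [h1, h2, h3]
    | succ j hj ih =>
      have hj2 : (9:ℝ) ≤ (j:ℝ) := by exact_mod_cast hj
      set y : ℝ := (j:ℝ) with hydef
      clear_value y
      set x : ℝ := y + 2 with hxdef
      clear_value x
      have hx : 11 ≤ x := by rw [hxdef]; linarith only [hj2]
      have pa := div_pos (hVpos (j+2)) (hVpos (j+1))
      have pb := div_pos (hVpos (j+3)) (hVpos (j+2))
      have pc := div_pos (hVpos (j+4)) (hVpos (j+3))
      have swa := SW (j+1) (by omega)
      have swb := SW (j+2) (by omega)
      have swc := SW (j+3) (by omega)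
      have ca : ((j+1:ℕ):ℝ)+1 = x := by rw [hxdef, hydef]; push_cast; ring
      have cb : ((j+2:ℕ):ℝ)+1 = x+1 := by rw [hxdef, hydef]; push_cast; ring
      have cc : ((j+3:ℕ):ℝ)+1 = x+2 := by rw [hxdef, hydef]; push_cast; ring
      rw [ca] at swa; rw [cb] at swb; rw [cc] at swc
      rw [show j+1+1 = j+2 from rfl] at swa
      rw [show j+2+1 = j+3 from rfl] at swb
      rw [show j+3+1 = j+4 from rfl] at swc
      have hbge : 16 ≤ V (j+3)/V (j+2) := le_trans (lff_ge (by linarith only [hx] : (11:ℝ) ≤ x+1)) swb.1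
      have hb2 : (256:ℝ) ≤ (V (j+3)/V (j+2))^2 := by
        have hmm := mul_le_mul hbge hbge (by norm_num) (le_trans (by norm_num) hbge)
        rw [sq]
        linarith only [hmm]
      have hac : V (j+2)/V (j+1) * (V (j+4)/V (j+3)) ≤ uff x * uff (x+2) :=
        mul_le_mul swa.2 swc.2 pc.le (le_of_lt (uff_pos hx))
      have hQ : (V (j+2)/V (j+1)) * (V (j+4)/V (j+3)) / ((V (j+3)/V (j+2))^2) - 1
          ≤ (uff x * uff (x+2) - (lff (x+1))^2)/256 := by
        have hD := S3 hx
        have hb2pos : (0:ℝ) < (V (j+3)/V (j+2))^2 := by positivity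
        rcases le_total ((V (j+2)/V (j+1)) * (V (j+4)/V (j+3))) ((V (j+3)/V (j+2))^2) with hle | hgt
        · have h1 : (V (j+2)/V (j+1)) * (V (j+4)/V (j+3)) / ((V (j+3)/V (j+2))^2) ≤ 1 := by
            rw [div_le_one hb2pos]; exact hle
          have h2 := div_nonneg hD (by norm_num : (0:ℝ) ≤ 256)
          linarith only [h1, h2]
        · have h16 : (16:ℝ) ≤ lff (x+1) := lff_ge (by linarith only [hx])
          have hbl : (lff (x+1))^2 ≤ (V (j+3)/V (j+2))^2 :=
            pow_le_pow_left₀ (by linarith only [h16]) swb.1 2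
          have hnum : (0:ℝ) ≤ (V (j+2)/V (j+1)) * (V (j+4)/V (j+3)) - (V (j+3)/V (j+2))^2 := by
            linarith only [hgt]
          have h1 : (V (j+2)/V (j+1)) * (V (j+4)/V (j+3)) / ((V (j+3)/V (j+2))^2) - 1
              = ((V (j+2)/V (j+1)) * (V (j+4)/V (j+3)) - (V (j+3)/V (j+2))^2)/((V (j+3)/V (j+2))^2) := by
            field_simp [(hVpos (j+1)).ne', (hVpos (j+2)).ne', (hVpos (j+3)).ne', (hVpos (j+4)).ne']
          have h2 : ((V (j+2)/V (j+1)) * (V (j+4)/V (j+3)) - (V (j+3)/V (j+2))^2)/((V (j+3)/V (j+2))^2)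
              ≤ ((V (j+2)/V (j+1)) * (V (j+4)/V (j+3)) - (V (j+3)/V (j+2))^2)/256 := by
            rw [div_le_div_iff₀ hb2pos (by norm_num)]
            have hmm := mul_le_mul_of_nonneg_left hb2 hnum
            linarith only [hmm]
          have h3 : ((V (j+2)/V (j+1)) * (V (j+4)/V (j+3)) - (V (j+3)/V (j+2))^2)/256
              ≤ (uff x * uff (x+2) - (lff (x+1))^2)/256 := by
            have h4 : (V (j+2)/V (j+1)) * (V (j+4)/V (j+3)) - (V (j+3)/V (j+2))^2
                ≤ uff x * uff (x+2) - (lff (x+1))^2 := by linarith only [hac, hbl]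
            linarith only [h4]
          linarith only [h1, h2, h3]
      have hlogeq : Real.log (V (j+2)/V (j+1)) + Real.log (V (j+4)/V (j+3)) - 2*Real.log (V (j+3)/V (j+2))
          = Real.log ((V (j+2)/V (j+1)) * (V (j+4)/V (j+3)) / ((V (j+3)/V (j+2))^2)) := by
        rw [Real.log_div (mul_pos pa pc).ne' (pow_ne_zero 2 pb.ne'), Real.log_mul pa.ne' pc.ne', Real.log_pow]
        push_cast
        ring
      have hlogle : Real.log (V (j+2)/V (j+1)) + Real.log (V (j+4)/V (j+3)) - 2*Real.log (V (j+3)/V (j+2))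
          ≤ (uff x * uff (x+2) - (lff (x+1))^2)/256 := by
        rw [hlogeq]
        have h5 := Real.log_le_sub_one_of_pos (show (0:ℝ) < (V (j+2)/V (j+1)) * (V (j+4)/V (j+3)) / ((V (j+3)/V (j+2))^2) by positivity)
        linarith only [h5, hQ]
      have hstep : (x)*(x+1)*(Real.log (V (j+2)/V (j+1)) + Real.log (V (j+4)/V (j+3)) - 2*Real.log (V (j+3)/V (j+2)))
          ≤ 23/(x-1)^2 - 23/x^2 := by
        have hcoefnn : (0:ℝ) ≤ x*(x+1) := by
          have hx0 : (0:ℝ) < x := by linarith only [hx]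
          positivity
        have h1 := mul_le_mul_of_nonneg_left hlogle hcoefnn
        have h2 := S4 hx
        calc x*(x+1)*(Real.log (V (j+2)/V (j+1)) + Real.log (V (j+4)/V (j+3)) - 2*Real.log (V (j+3)/V (j+2)))
            ≤ x*(x+1)*((uff x * uff (x+2) - (lff (x+1))^2)/256) := h1
          _ = x*(x+1)*(uff x * uff (x+2) - (lff (x+1))^2)/256 := by ring
          _ ≤ 23/(x-1)^2 - 23/x^2 := h2
      have hVmul : V (j+3) = V (j+2) * (V (j+3)/V (j+2)) := by
        field_simp [(hVpos (j+2)).ne']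
      have hlogV : Real.log (V (j+3)) = Real.log (V (j+2)) + Real.log (V (j+3)/V (j+2)) := by
        nth_rewrite 1 [hVmul]
        rw [Real.log_mul (hVpos (j+2)).ne' pb.ne']
      have hc1 : ((j+1:ℕ):ℝ) = y+1 := by rw [hydef]; push_cast; ring
      rw [hc1]
      rw [show (j+1)+2 = j+3 from rfl, show (j+1)+1 = j+2 from rfl, show (j+1)+3 = j+4 from rfl]
      rw [hlogV]
      have hxy1 : x - 1 = y + 1 := by rw [hxdef]; ring
      have hxy2 : x = y + 2 := by rw [hxdef]
      rw [hxy1, hxy2] at hstep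
      rw [hxy2] at ih
      rw [show ((y+1)+1 : ℝ) = y+2 from by ring]
      linarith only [ih, hstep]
  -- conclude the key inequality for all n = m+2
  have KEY : ∀ m : ℕ, 0 < ((m:ℝ)+2)*((m:ℝ)+3)*Real.log (V (m+2)/V (m+1)) - 2*Real.log (V (m+2))
      - ((m:ℝ)+2)*((m:ℝ)+1)*Real.log (V (m+3)/V (m+2)) := by
    intro m
    rcases le_or_gt 9 m with hm | hm
    · have h := IND m hm
      have hp : (0:ℝ) < 23/((m:ℝ)+1)^2 := by positivity
      linarith only [h, hp]
    · interval_cases m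
      · norm_num
        -- m = 0, n = 2
        have e1 : V 2 / V 1 = 16 * ((9:ℝ)/8) := by rw [v2, hV1]; norm_num
        have e2 : V 3 / V 2 = 16 * ((19:ℝ)/18) := by rw [v3, v2]; norm_num
        have e3 : V 2 = (16:ℝ)^(2:ℕ) * ((9:ℝ)/16) := by rw [v2]; norm_num
        rw [e1, e2, e3, Real.log_mul (by norm_num) (by norm_num), Real.log_mul (by norm_num) (by norm_num),
          Real.log_mul (by positivity) (by norm_num), Real.log_pow]
        have h1 : 1 - 1/((9:ℝ)/8) ≤ Real.log ((9:ℝ)/8) := loglb (by norm_num)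
        have h2 : Real.log ((19:ℝ)/18) ≤ ((19:ℝ)/18) - 1 := Real.log_le_sub_one_of_pos (by norm_num)
        have h3 : Real.log ((9:ℝ)/16) ≤ ((9:ℝ)/16) - 1 := Real.log_le_sub_one_of_pos (by norm_num)
        push_cast
        linarith only [h1, h2, h3]
      · norm_num
        -- m = 1, n = 3
        have e1 : V 3 / V 2 = 16 * ((19:ℝ)/18) := by rw [v3, v2]; norm_num
        have e2 : V 4 / V 3 = 16 * ((625:ℝ)/608) := by rw [v4, v3]; norm_num
        have e3 : V 3 = (16:ℝ)^(3:ℕ) * ((19:ℝ)/32) := by rw [v3]; norm_num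
        rw [e1, e2, e3, Real.log_mul (by norm_num) (by norm_num), Real.log_mul (by norm_num) (by norm_num),
          Real.log_mul (by positivity) (by norm_num), Real.log_pow]
        have h1 : 1 - 1/((19:ℝ)/18) ≤ Real.log ((19:ℝ)/18) := loglb (by norm_num)
        have h2 : Real.log ((625:ℝ)/608) ≤ ((625:ℝ)/608) - 1 := Real.log_le_sub_one_of_pos (by norm_num)
        have h3 : Real.log ((19:ℝ)/32) ≤ ((19:ℝ)/32) - 1 := Real.log_le_sub_one_of_pos (by norm_num)
        push_cast
        linarith only [h1, h2, h3]
      · norm_num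
        -- m = 2, n = 4
        have e1 : V 4 / V 3 = 16 * ((625:ℝ)/608) := by rw [v4, v3]; norm_num
        have e2 : V 5 / V 4 = 16 * ((1269:ℝ)/1250) := by rw [v5, v4]; norm_num
        have e3 : V 4 = (16:ℝ)^(4:ℕ) * ((625:ℝ)/1024) := by rw [v4]; norm_num
        rw [e1, e2, e3, Real.log_mul (by norm_num) (by norm_num), Real.log_mul (by norm_num) (by norm_num),
          Real.log_mul (by positivity) (by norm_num), Real.log_pow]
        have h1 : 1 - 1/((625:ℝ)/608) ≤ Real.log ((625:ℝ)/608) := loglb (by norm_num)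
        have h2 : Real.log ((1269:ℝ)/1250) ≤ ((1269:ℝ)/1250) - 1 := Real.log_le_sub_one_of_pos (by norm_num)
        have h3 : Real.log ((625:ℝ)/1024) ≤ ((625:ℝ)/1024) - 1 := Real.log_le_sub_one_of_pos (by norm_num)
        push_cast
        linarith only [h1, h2, h3]
      · norm_num
        -- m = 3, n = 5
        have e1 : V 5 / V 4 = 16 * ((1269:ℝ)/1250) := by rw [v5, v4]; norm_num
        have e2 : V 6 / V 5 = 16 * ((10241:ℝ)/10152) := by rw [v6, v5]; norm_num
        have e3 : V 5 = (16:ℝ)^(5:ℕ) * ((1269:ℝ)/2048) := by rw [v5]; norm_num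
        rw [e1, e2, e3, Real.log_mul (by norm_num) (by norm_num), Real.log_mul (by norm_num) (by norm_num),
          Real.log_mul (by positivity) (by norm_num), Real.log_pow]
        have h1 : 1 - 1/((1269:ℝ)/1250) ≤ Real.log ((1269:ℝ)/1250) := loglb (by norm_num)
        have h2 : Real.log ((10241:ℝ)/10152) ≤ ((10241:ℝ)/10152) - 1 := Real.log_le_sub_one_of_pos (by norm_num)
        have h3 : Real.log ((1269:ℝ)/2048) ≤ ((1269:ℝ)/2048) - 1 := Real.log_le_sub_one_of_pos (by norm_num)
        push_cast
        linarith only [h1, h2, h3]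
      · norm_num
        -- m = 4, n = 6
        have e1 : V 6 / V 5 = 16 * ((10241:ℝ)/10152) := by rw [v6, v5]; norm_num
        have e2 : V 7 / V 6 = 16 * ((20591:ℝ)/20482) := by rw [v7, v6]; norm_num
        have e3 : V 6 = (16:ℝ)^(6:ℕ) * ((10241:ℝ)/16384) := by rw [v6]; norm_num
        rw [e1, e2, e3, Real.log_mul (by norm_num) (by norm_num), Real.log_mul (by norm_num) (by norm_num),
          Real.log_mul (by positivity) (by norm_num), Real.log_pow]
        have h1 : 1 - 1/((10241:ℝ)/10152) ≤ Real.log ((10241:ℝ)/10152) := loglb (by norm_num)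
        have h2 : Real.log ((20591:ℝ)/20482) ≤ ((20591:ℝ)/20482) - 1 := Real.log_le_sub_one_of_pos (by norm_num)
        have h3 : Real.log ((10241:ℝ)/16384) ≤ ((10241:ℝ)/16384) - 1 := Real.log_le_sub_one_of_pos (by norm_num)
        push_cast
        linarith only [h1, h2, h3]
      · norm_num
        -- m = 5, n = 7
        have e1 : V 7 / V 6 = 16 * ((20591:ℝ)/20482) := by rw [v7, v6]; norm_num
        have e2 : V 8 / V 7 = 16 * ((2644569:ℝ)/2635648) := by rw [v8, v7]; norm_num
        have e3 : V 7 = (16:ℝ)^(7:ℕ) * ((20591:ℝ)/32768) := by rw [v7]; norm_num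
        rw [e1, e2, e3, Real.log_mul (by norm_num) (by norm_num), Real.log_mul (by norm_num) (by norm_num),
          Real.log_mul (by positivity) (by norm_num), Real.log_pow]
        have h1 : 1 - 1/((20591:ℝ)/20482) ≤ Real.log ((20591:ℝ)/20482) := loglb (by norm_num)
        have h2 : Real.log ((2644569:ℝ)/2635648) ≤ ((2644569:ℝ)/2635648) - 1 := Real.log_le_sub_one_of_pos (by norm_num)
        have h3 : Real.log ((20591:ℝ)/32768) ≤ ((20591:ℝ)/32768) - 1 := Real.log_le_sub_one_of_pos (by norm_num)
        push_cast
        linarith only [h1, h2, h3]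
      · norm_num
        -- m = 6, n = 8
        have e1 : V 8 / V 7 = 16 * ((2644569:ℝ)/2635648) := by rw [v8, v7]; norm_num
        have e2 : V 9 / V 8 = 16 * ((5301025:ℝ)/5289138) := by rw [v9, v8]; norm_num
        have e3 : V 8 = (16:ℝ)^(8:ℕ) * ((2644569:ℝ)/4194304) := by rw [v8]; norm_num
        rw [e1, e2, e3, Real.log_mul (by norm_num) (by norm_num), Real.log_mul (by norm_num) (by norm_num),
          Real.log_mul (by positivity) (by norm_num), Real.log_pow]
        have h1 : 1 - 1/((2644569:ℝ)/2635648) ≤ Real.log ((2644569:ℝ)/2635648) := loglb (by norm_num)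
        have h2 : Real.log ((5301025:ℝ)/5289138) ≤ ((5301025:ℝ)/5289138) - 1 := Real.log_le_sub_one_of_pos (by norm_num)
        have h3 : Real.log ((2644569:ℝ)/4194304) ≤ ((2644569:ℝ)/4194304) - 1 := Real.log_le_sub_one_of_pos (by norm_num)
        push_cast
        linarith only [h1, h2, h3]
      · norm_num
        -- m = 7, n = 9
        have e1 : V 9 / V 8 = 16 * ((5301025:ℝ)/5289138) := by rw [v9, v8]; norm_num
        have e2 : V 10 / V 9 = 16 * ((1698961:ℝ)/1696328) := by rw [v10, v9]; norm_num
        have e3 : V 9 = (16:ℝ)^(9:ℕ) * ((5301025:ℝ)/8388608) := by rw [v9]; norm_num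
        rw [e1, e2, e3, Real.log_mul (by norm_num) (by norm_num), Real.log_mul (by norm_num) (by norm_num),
          Real.log_mul (by positivity) (by norm_num), Real.log_pow]
        have h1 : 1 - 1/((5301025:ℝ)/5289138) ≤ Real.log ((5301025:ℝ)/5289138) := loglb (by norm_num)
        have h2 : Real.log ((1698961:ℝ)/1696328) ≤ ((1698961:ℝ)/1696328) - 1 := Real.log_le_sub_one_of_pos (by norm_num)
        have h3 : Real.log ((5301025:ℝ)/8388608) ≤ ((5301025:ℝ)/8388608) - 1 := Real.log_le_sub_one_of_pos (by norm_num)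
        push_cast
        linarith only [h1, h2, h3]
      · norm_num
        -- m = 8, n = 10
        have e1 : V 10 / V 9 = 16 * ((1698961:ℝ)/1696328) := by rw [v10, v9]; norm_num
        have e2 : V 11 / V 10 = 16 * ((17008479:ℝ)/16989610) := by rw [v11, v10]; norm_num
        have e3 : V 10 = (16:ℝ)^(10:ℕ) * ((42474025:ℝ)/67108864) := by rw [v10]; norm_num
        rw [e1, e2, e3, Real.log_mul (by norm_num) (by norm_num), Real.log_mul (by norm_num) (by norm_num),
          Real.log_mul (by positivity) (by norm_num), Real.log_pow]
        have h1 : 1 - 1/((1698961:ℝ)/1696328) ≤ Real.log ((1698961:ℝ)/1696328) := loglb (by norm_num)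
        have h2 : Real.log ((17008479:ℝ)/16989610) ≤ ((17008479:ℝ)/16989610) - 1 := Real.log_le_sub_one_of_pos (by norm_num)
        have h3 : Real.log ((42474025:ℝ)/67108864) ≤ ((42474025:ℝ)/67108864) - 1 := Real.log_le_sub_one_of_pos (by norm_num)
        push_cast
        linarith only [h1, h2, h3]
  -- final conversion
  intro n hn
  obtain ⟨m, rfl⟩ : ∃ m, n = m + 2 := ⟨n - 2, by omega⟩
  rw [show m+2-1 = m+1 from rfl]
  have hA : 0 < V (m+2) / V (m+1) := div_pos (hVpos (m+2)) (hVpos (m+1))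
  have hB : 0 < V (m+2+1) / V (m+2) := div_pos (hVpos (m+2+1)) (hVpos (m+2))
  have hL : 0 < (V (m+2) / V (m+1)) ^ ((m+2) * (m+2+1)) := by positivity
  have hR : 0 < V (m+2)^2 * (V (m+2+1) / V (m+2)) ^ ((m+2)*(m+1)) := by
    have hv := hVpos (m+2)
    positivity
  rw [gt_iff_lt, ← Real.exp_log hR, ← Real.exp_log hL, Real.exp_lt_exp]
  rw [Real.log_pow, Real.log_mul (pow_ne_zero 2 (hVpos (m+2)).ne') (pow_ne_zero _ hB.ne'), Real.log_pow, Real.log_pow]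
  have hk := KEY m
  rw [show m+2+1 = m+3 from rfl] at *
  push_cast
  linarith only [hk]
end

section
/- Let h(n) = 16(n^3 − n^2 + 1)/(n^3 − n^2) for integers n ≥ 2. Then for every integer n ≥ 10, (h(n))^n > V_n. -/
set_option maxHeartbeats 1000000


theorem hn_pow_gt_Vn (V : ℕ → ℝ)
    (hV0 : V 0 = 1) (hV1 : V 1 = 8)
    (hVrec : ∀ n : ℕ, 1 ≤ n →
      (n : ℝ) * ((n : ℝ) + 1) ^ 2 * V (n + 1)
        = 8 * (n : ℝ) * (3 * (n : ℝ) ^ 2 + 5 * (n : ℝ) + 1) * V n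
          - 128 * ((n : ℝ) - 1) * ((n : ℝ) + 1) ^ 2 * V (n - 1))
    (hVpos : ∀ n : ℕ, 0 < V n) :
    ∀ n : ℕ, 10 ≤ n →
      (16 * ((n : ℝ) ^ 3 - (n : ℝ) ^ 2 + 1) / ((n : ℝ) ^ 3 - (n : ℝ) ^ 2)) ^ n > V n := by
  -- exact initial values
  have hV2 : V 2 = 144 := by
    have h := hVrec 1 (by norm_num); norm_num [hV0, hV1] at h; linarith
  have hV3 : V 3 = 2432 := by
    have h := hVrec 2 (by norm_num); norm_num [hV1, hV2] at h; linarith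
  have hV4 : V 4 = 40000 := by
    have h := hVrec 3 (by norm_num); norm_num [hV2, hV3] at h; linarith
  have hV5 : V 5 = 649728 := by
    have h := hVrec 4 (by norm_num); norm_num [hV3, hV4] at h; linarith
  have hV6 : V 6 = 10486784 := by
    have h := hVrec 5 (by norm_num); norm_num [hV4, hV5] at h; linarith
  have hV7 : V 7 = 168681472 := by
    have h := hVrec 6 (by norm_num); norm_num [hV5, hV6] at h; linarith
  have hV8 : V 8 = 2708038656 := by
    have h := hVrec 7 (by norm_num); norm_num [hV6, hV7] at h; linarith
  have hV9 : V 9 = 43425996800 := by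
    have h := hVrec 8 (by norm_num); norm_num [hV7, hV8] at h; linarith
  have hV10 : V 10 = 695894425600 := by
    have h := hVrec 9 (by norm_num); norm_num [hV8, hV9] at h; linarith
  -- ratio upper bound: n^2 V(n+1) ≤ (16 n^2 + 3) V n for n ≥ 9
  have hrat : ∀ n : ℕ, 9 ≤ n → (n : ℝ) ^ 2 * V (n + 1) ≤ (16 * (n : ℝ) ^ 2 + 3) * V n := by
    intro n hn
    induction n, hn using Nat.le_induction with
    | base => rw [hV9, hV10]; norm_num
    | succ m hm ih =>
      have h := hVrec (m + 1) (by omega)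
      simp only [Nat.add_sub_cancel] at h
      push_cast at h
      set x : ℝ := (m : ℝ) with hxdef
      have hx9 : (9 : ℝ) ≤ x := by rw [hxdef]; exact_mod_cast hm
      have ht : (0 : ℝ) ≤ x - 9 := by linarith
      have hp1 : (0 : ℝ) < V (m + 1) := hVpos (m + 1)
      -- scale ih by 128 x (x+2)^2 ≥ 0
      have hs : 128 * x * (x + 2) ^ 2 * (x ^ 2 * V (m + 1))
          ≤ 128 * x * (x + 2) ^ 2 * ((16 * x ^ 2 + 3) * V m) := by
        apply mul_le_mul_of_nonneg_left ih; positivity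
      -- multiply recurrence by (16x^2+3)
      have key : (16 * x ^ 2 + 3) * ((x + 1) * (x + 2) ^ 2) * V (m + 2)
          ≤ ((16 * x ^ 2 + 3) * (8 * (x + 1) * (3 * (x + 1) ^ 2 + 5 * (x + 1) + 1))
              - 128 * x ^ 3 * (x + 2) ^ 2) * V (m + 1) := by
        nlinarith [hs, h]
      -- polynomial inequality
      have hpoly : (x + 1) ^ 2 *
            ((16 * x ^ 2 + 3) * (8 * (x + 1) * (3 * (x + 1) ^ 2 + 5 * (x + 1) + 1))
              - 128 * x ^ 3 * (x + 2) ^ 2)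
          ≤ (16 * x ^ 2 + 3) * ((x + 1) * (x + 2) ^ 2) * (16 * (x + 1) ^ 2 + 3) := by
        nlinarith [ht, mul_nonneg ht ht, mul_nonneg (mul_nonneg ht ht) ht,
          mul_nonneg (mul_nonneg (mul_nonneg ht ht) ht) ht,
          mul_nonneg (mul_nonneg (mul_nonneg (mul_nonneg ht ht) ht) ht) ht]
      have hcpos : (0 : ℝ) < (16 * x ^ 2 + 3) * ((x + 1) * (x + 2) ^ 2) := by positivity
      have final : (16 * x ^ 2 + 3) * ((x + 1) * (x + 2) ^ 2) * ((x + 1) ^ 2 * V (m + 2))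
          ≤ (16 * x ^ 2 + 3) * ((x + 1) * (x + 2) ^ 2)
              * ((16 * (x + 1) ^ 2 + 3) * V (m + 1)) := by
        calc (16 * x ^ 2 + 3) * ((x + 1) * (x + 2) ^ 2) * ((x + 1) ^ 2 * V (m + 2))
            = (x + 1) ^ 2 * ((16 * x ^ 2 + 3) * ((x + 1) * (x + 2) ^ 2) * V (m + 2)) := by
              ring
          _ ≤ (x + 1) ^ 2 * (((16 * x ^ 2 + 3) * (8 * (x + 1) * (3 * (x + 1) ^ 2 + 5 * (x + 1) + 1))
                - 128 * x ^ 3 * (x + 2) ^ 2) * V (m + 1)) := by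
              apply mul_le_mul_of_nonneg_left key; positivity
          _ = ((x + 1) ^ 2 * ((16 * x ^ 2 + 3) * (8 * (x + 1) * (3 * (x + 1) ^ 2 + 5 * (x + 1) + 1))
                - 128 * x ^ 3 * (x + 2) ^ 2)) * V (m + 1) := by ring
          _ ≤ ((16 * x ^ 2 + 3) * ((x + 1) * (x + 2) ^ 2) * (16 * (x + 1) ^ 2 + 3)) * V (m + 1) := by
              apply mul_le_mul_of_nonneg_right hpoly hp1.le
          _ = (16 * x ^ 2 + 3) * ((x + 1) * (x + 2) ^ 2)
                * ((16 * (x + 1) ^ 2 + 3) * V (m + 1)) := by ring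
      have := le_of_mul_le_mul_left final hcpos
      push_cast
      exact this
  -- main upper bound: 4 n V n ≤ (4 n - 1) 16^n for n ≥ 10
  have hup : ∀ n : ℕ, 10 ≤ n → 4 * (n : ℝ) * V n ≤ (4 * (n : ℝ) - 1) * 16 ^ n := by
    intro n hn
    induction n, hn using Nat.le_induction with
    | base => rw [hV10]; norm_num
    | succ m hm ih =>
      have hr := hrat m (by omega)
      set x : ℝ := (m : ℝ) with hxdef
      have hx : (10 : ℝ) ≤ x := by rw [hxdef]; exact_mod_cast hm
      have hP : (0 : ℝ) < (16 : ℝ) ^ m := by positivity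
      have hc : (0 : ℝ) < 4 * x * x ^ 2 := by positivity
      have final : 4 * x * x ^ 2 * (4 * (x + 1) * V (m + 1))
          ≤ 4 * x * x ^ 2 * ((4 * (x + 1) - 1) * 16 ^ (m + 1)) := by
        have hcoef : 4 * (x + 1) * (16 * x ^ 2 + 3) * (4 * x - 1)
            ≤ 4 * x * x ^ 2 * ((4 * x + 3) * 16) := by nlinarith [hx]
        calc 4 * x * x ^ 2 * (4 * (x + 1) * V (m + 1))
            = 16 * x * (x + 1) * (x ^ 2 * V (m + 1)) := by ring
          _ ≤ 16 * x * (x + 1) * ((16 * x ^ 2 + 3) * V m) := by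
              apply mul_le_mul_of_nonneg_left hr; positivity
          _ = 4 * (x + 1) * (16 * x ^ 2 + 3) * (4 * x * V m) := by ring
          _ ≤ 4 * (x + 1) * (16 * x ^ 2 + 3) * ((4 * x - 1) * 16 ^ m) := by
              apply mul_le_mul_of_nonneg_left ih; positivity
          _ = (4 * (x + 1) * (16 * x ^ 2 + 3) * (4 * x - 1)) * 16 ^ m := by ring
          _ ≤ (4 * x * x ^ 2 * ((4 * x + 3) * 16)) * 16 ^ m :=
              mul_le_mul_of_nonneg_right hcoef hP.le
          _ = 4 * x * x ^ 2 * ((4 * (x + 1) - 1) * 16 ^ (m + 1)) := by rw [pow_succ]; ring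
      have := le_of_mul_le_mul_left final hc
      push_cast
      exact this
  -- finish
  intro n hn
  set x : ℝ := (n : ℝ) with hxdef
  have hx : (10 : ℝ) ≤ x := by rw [hxdef]; exact_mod_cast hn
  have hVlt : V n < (16 : ℝ) ^ n := by
    have h1 := hup n hn
    have hP : (0 : ℝ) < (16 : ℝ) ^ n := by positivity
    have h2 : (4 * x - 1) * 16 ^ n < 4 * x * 16 ^ n := by nlinarith
    have h3 : 4 * x * V n < 4 * x * (16 : ℝ) ^ n := lt_of_le_of_lt h1 h2
    have hxpos : (0 : ℝ) < 4 * x := by linarith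
    exact lt_of_mul_lt_mul_left h3 hxpos.le
  have hd : (0 : ℝ) < x ^ 3 - x ^ 2 := by nlinarith [hx, sq_nonneg x]
  have h16 : (16 : ℝ) < 16 * (x ^ 3 - x ^ 2 + 1) / (x ^ 3 - x ^ 2) := by
    rw [lt_div_iff₀ hd]; nlinarith
  have hpow : (16 : ℝ) ^ n < (16 * (x ^ 3 - x ^ 2 + 1) / (x ^ 3 - x ^ 2)) ^ n :=
    pow_lt_pow_left₀ h16 (by norm_num) (by omega)
  exact lt_trans hVlt hpow
end

section
/- For every integer n ≥ 1, the central binomial coefficient satisfies C(2n, n) < 4^n / sqrt(π n). -/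
theorem centralBinom_lt_four_pow_div_sqrt_pi :
    ∀ n : ℕ, 1 ≤ n →
      ((Nat.choose (2 * n) n : ℝ)) < 4 ^ n / Real.sqrt (Real.pi * (n : ℝ)) := by
  intro n hn
  have hN1 : (1 : ℝ) ≤ (n : ℝ) := by exact_mod_cast hn
  have hN0 : (0 : ℝ) < (n : ℝ) := lt_of_lt_of_le one_pos hN1
  have hc0 : (0 : ℝ) < (Nat.choose (2 * n) n : ℝ) := by
    exact_mod_cast Nat.choose_pos (show n ≤ 2 * n by omega)
  have hfac : ((Nat.factorial (2 * n) : ℕ) : ℝ)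
      = (Nat.choose (2 * n) n : ℝ) * (Nat.factorial n : ℝ) * (Nat.factorial n : ℝ) := by
    have := Nat.choose_mul_factorial_mul_factorial (show n ≤ 2 * n by omega)
    have h2 : 2 * n - n = n := by omega
    rw [h2] at this
    exact_mod_cast this.symm
  have key : (Nat.choose (2 * n) n : ℝ) ^ 2 * (2 * (n : ℝ) + 1) * Real.Wallis.W n
      = 16 ^ n := by
    rw [Real.Wallis.W_eq_factorial_ratio]
    have hfacpos : (0 : ℝ) < (Nat.factorial n : ℝ) := by exact_mod_cast n.factorial_pos
    rw [hfac]
    have h16 : (2 : ℝ) ^ (4 * n) = 16 ^ n := by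
      rw [pow_mul]; norm_num
    rw [h16]
    field_simp
  have hW := Real.Wallis.le_W n
  have hWpos := Real.Wallis.W_pos n
  have hW' : (2 * (n : ℝ) + 1) * Real.pi
      ≤ Real.Wallis.W n * ((2 * (n : ℝ) + 2) * 2) := by
    have h : ((2 * (n : ℝ) + 1) * Real.pi) / ((2 * (n : ℝ) + 2) * 2)
        ≤ Real.Wallis.W n := by
      have he : (2 * (n : ℝ) + 1) / (2 * (n : ℝ) + 2) * (Real.pi / 2)
          = ((2 * (n : ℝ) + 1) * Real.pi) / ((2 * (n : ℝ) + 2) * 2) := by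
        field_simp
      rw [← he]; exact hW
    exact (div_le_iff₀ (by positivity)).mp h
  have hmain : (Nat.choose (2 * n) n : ℝ) ^ 2 * (Real.pi * (n : ℝ)) < 16 ^ n := by
    rw [← key]
    have hpi := Real.pi_pos
    nlinarith [mul_le_mul_of_nonneg_left hW' (le_of_lt (mul_pos (pow_pos hc0 2) hN0)),
      mul_pos (pow_pos hc0 2) hpi, sq_nonneg (2 * (n : ℝ) + 1)]
  have hsq : 0 < Real.sqrt (Real.pi * (n : ℝ)) :=
    Real.sqrt_pos.mpr (by positivity)
  rw [lt_div_iff₀ hsq]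
  have h16 : ((4 : ℝ) ^ n) ^ 2 = 16 ^ n := by
    rw [← pow_mul, mul_comm, pow_mul]; norm_num
  refine lt_of_pow_lt_pow_left₀ 2 (by positivity) ?_
  rw [mul_pow, Real.sq_sqrt (by positivity), h16]
  exact hmain
end

section
/- The sequence of quotients { P_{n+1}^(1/(n+1)) / P_n^(1/n) }_{n≥1} is strictly decreasing, i.e., for every integer n ≥ 2, P_n^(1/n) / P_{n-1}^(1/(n-1)) > P_{n+1}^(1/(n+1)) / P_n^(1/n). -/
set_option maxHeartbeats 2000000

open Real

/-- Reduction to a logarithmic inequality. -/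
lemma clf_logform (n : ℕ) (hn : 2 ≤ n) (x y z : ℝ) (hx : 0 < x) (hy : 0 < y) (hz : 0 < z)
    (hlog : (n:ℝ) * ((n:ℝ) - 1) * Real.log z + (n:ℝ) * ((n:ℝ) + 1) * Real.log x
      < 2 * ((n:ℝ)^2 - 1) * Real.log y) :
    y ^ ((1:ℝ)/(n:ℝ)) / x ^ ((1:ℝ)/((n:ℝ)-1)) > z ^ ((1:ℝ)/((n:ℝ)+1)) / y ^ ((1:ℝ)/(n:ℝ)) := by
  have hN : (2:ℝ) ≤ (n:ℝ) := by exact_mod_cast hn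
  set N := (n:ℝ)
  have hN0 : (0:ℝ) < N := by linarith
  have hN1 : (0:ℝ) < N - 1 := by linarith
  have hN2 : (0:ℝ) < N + 1 := by linarith
  have p1 : 0 < y ^ ((1:ℝ)/N) := Real.rpow_pos_of_pos hy _
  have p2 : 0 < x ^ ((1:ℝ)/(N-1)) := Real.rpow_pos_of_pos hx _
  have p3 : 0 < z ^ ((1:ℝ)/(N+1)) := Real.rpow_pos_of_pos hz _
  rw [gt_iff_lt, ← Real.log_lt_log_iff (by positivity) (by positivity),
    Real.log_div (by positivity) (by positivity), Real.log_div (by positivity) (by positivity),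
    Real.log_rpow hy, Real.log_rpow hx, Real.log_rpow hz]
  have key : ((1:ℝ)/N * Real.log y - 1/(N-1) * Real.log x)
      - (1/(N+1) * Real.log z - 1/N * Real.log y)
      = (2 * (N^2 - 1) * Real.log y
          - (N * (N - 1) * Real.log z + N * (N + 1) * Real.log x)) / (N * (N-1) * (N+1)) := by
    field_simp
    ring
  have hpos : 0 < N * (N-1) * (N+1) := by positivity
  nlinarith [div_pos (by linarith : 0 < 2 * (N^2 - 1) * Real.log y
      - (N * (N - 1) * Real.log z + N * (N + 1) * Real.log x)) hpos, key]

/-- Reduction to an integral power inequality (for small cases). -/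
lemma clf_powform (n : ℕ) (hn : 2 ≤ n) (x y z : ℝ) (hx : 0 < x) (hy : 0 < y) (hz : 0 < z)
    (h : z ^ (n * (n-1)) * x ^ (n * (n+1)) < y ^ (2 * (n^2 - 1))) :
    y ^ ((1:ℝ)/(n:ℝ)) / x ^ ((1:ℝ)/((n:ℝ)-1)) > z ^ ((1:ℝ)/((n:ℝ)+1)) / y ^ ((1:ℝ)/(n:ℝ)) := by
  apply clf_logform n hn x y z hx hy hz
  have hlog := Real.log_lt_log (by positivity) h
  rw [Real.log_mul (by positivity) (by positivity), Real.log_pow, Real.log_pow,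
    Real.log_pow] at hlog
  have c1 : ((n * (n-1) : ℕ) : ℝ) = (n:ℝ) * ((n:ℝ) - 1) := by
    rw [Nat.cast_mul, Nat.cast_sub (by omega : 1 ≤ n), Nat.cast_one]
  have c2 : ((n * (n+1) : ℕ) : ℝ) = (n:ℝ) * ((n:ℝ) + 1) := by push_cast; ring
  have c3 : ((2 * (n^2 - 1) : ℕ) : ℝ) = 2 * ((n:ℝ)^2 - 1) := by
    rw [Nat.cast_mul, Nat.cast_sub (by nlinarith : 1 ≤ n^2)]
    push_cast; ring
  rw [c1, c2, c3] at hlog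
  linarith

theorem Pn_root_quotient_strict_anti (P : ℕ → ℝ)
    (hP0 : P 0 = 1) (hP1 : P 1 = 8)
    (hPrec : ∀ n : ℕ, 1 ≤ n →
      ((n : ℝ) + 1) ^ 2 * P (n + 1)
        = 8 * (3 * (n : ℝ) ^ 2 + 3 * (n : ℝ) + 1) * P n - 128 * (n : ℝ) ^ 2 * P (n - 1))
    (hPpos : ∀ n : ℕ, 0 < P n) :
    ∀ n : ℕ, 2 ≤ n →
      P n ^ ((1 : ℝ) / (n : ℝ)) / P (n - 1) ^ ((1 : ℝ) / ((n : ℝ) - 1))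
        > P (n + 1) ^ ((1 : ℝ) / ((n : ℝ) + 1)) / P n ^ ((1 : ℝ) / (n : ℝ)) := by
  -- concrete values
  have hP2 : P 2 = 80 := by
    have h := hPrec 1 (by norm_num); norm_num [hP0, hP1] at h; linarith
  have hP3 : P 3 = 896 := by
    have h := hPrec 2 (by norm_num); norm_num [hP1, hP2] at h; linarith
  have hP4 : P 4 = 10816 := by
    have h := hPrec 3 (by norm_num); norm_num [hP2, hP3] at h; linarith
  have hP5 : P 5 = 137728 := by
    have h := hPrec 4 (by norm_num); norm_num [hP3, hP4] at h; linarith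
  have hP6 : P 6 = 1823744 := by
    have h := hPrec 5 (by norm_num); norm_num [hP4, hP5] at h; linarith
  have hP7 : P 7 = 24862720 := by
    have h := hPrec 6 (by norm_num); norm_num [hP5, hP6] at h; linarith
  have hP8 : P 8 = 346498048 := by
    have h := hPrec 7 (by norm_num); norm_num [hP6, hP7] at h; linarith
  have hP9 : P 9 = 4911669248 := by
    have h := hPrec 8 (by norm_num); norm_num [hP7, hP8] at h; linarith
  have hP10 : P 10 = 70560071680 := by
    have h := hPrec 9 (by norm_num); norm_num [hP8, hP9] at h; linarith
  -- ratio bounds : for m ≥ 4,  16-16/(m+1)-12/(m+1)^2 ≤ P(m+1)/P m ≤ 16-16/(m+1)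
  have hbnd : ∀ m : ℕ, 4 ≤ m →
      (16*((m:ℝ)+1)^2 - 16*((m:ℝ)+1) - 12) * P m ≤ ((m:ℝ)+1)^2 * P (m+1) ∧
      ((m:ℝ)+1) * P (m+1) ≤ 16*(m:ℝ) * P m := by
    intro m hm
    induction m, hm using Nat.le_induction with
    | base =>
      norm_num [hP4, hP5]
    | succ k hk ih =>
      obtain ⟨ih1, ih2⟩ := ih
      have hrec := hPrec (k+1) (by omega)
      simp only [Nat.add_sub_cancel] at hrec
      push_cast at hrec ⊢
      have pk := hPpos k
      have pk1 := hPpos (k+1)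
      have pk2 := hPpos (k+2)
      have hk4 : (4:ℝ) ≤ (k:ℝ) := by exact_mod_cast hk
      set K := (k:ℝ) with hK
      have hD : (0:ℝ) < 16*(K+1)^2 - 16*(K+1) - 12 := by nlinarith
      constructor
      · -- lower bound
        have key : (16*(K+1)^2 - 16*(K+1) - 12) *
              ((16*(K+1+1)^2 - 16*(K+1+1) - 12) * P (k+1))
            ≤ (16*(K+1)^2 - 16*(K+1) - 12) * ((K+1+1)^2 * P (k+1+1)) := by
          have hrecD : (16*(K+1)^2 - 16*(K+1) - 12) * ((K+1+1)^2 * P (k+1+1))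
              = (16*(K+1)^2 - 16*(K+1) - 12) *
                (8*(3*(K+1)^2+3*(K+1)+1) * P (k+1) - 128*(K+1)^2 * P k) := by
            rw [hrec]
          have h128 := mul_le_mul_of_nonneg_left ih1
            (show (0:ℝ) ≤ 128*(K+1)^2 by positivity)
          have hslack : (0:ℝ) ≤ (96*(K+1)^2 - 416*(K+1) - 240) * P (k+1) :=
            mul_nonneg (by nlinarith) pk1.le
          nlinarith [hrecD, h128, hslack]
        exact le_of_mul_le_mul_left key hD
      · -- upper bound
        have hKp : (0:ℝ) < K * (K+2) := by nlinarith
        have key : K * (K+2) * ((K+1+1) * P (k+1+1))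
            ≤ K * (K+2) * (16*(K+1) * P (k+1)) := by
          have hrecK : K * ((K+1+1)^2 * P (k+1+1))
              = K * (8*(3*(K+1)^2+3*(K+1)+1) * P (k+1) - 128*(K+1)^2 * P k) := by
            rw [hrec]
          have h8 := mul_le_mul_of_nonneg_left ih2
            (show (0:ℝ) ≤ 8*(K+1)^2 by positivity)
          nlinarith [hrecK, h8, pk1.le]
        exact le_of_mul_le_mul_left key hKp
  -- 256 m P m ≤ 169 * 16^m  for m ≥ 4
  have hC : ∀ m : ℕ, 4 ≤ m → 256*(m:ℝ)*P m ≤ 169*(16:ℝ)^m := by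
    intro m hm
    induction m, hm using Nat.le_induction with
    | base => rw [hP4]; norm_num
    | succ k hk ih =>
      have h2 := (hbnd k hk).2
      rw [pow_succ]
      push_cast
      nlinarith [ih, h2, hPpos k, hPpos (k+1)]
  intro n hn
  rcases lt_or_ge n 10 with hlt | hge
  · -- small cases 2 ≤ n ≤ 9
    interval_cases n
    · exact clf_powform 2 (by norm_num) (P 1) (P 2) (P 3) (hPpos 1) (hPpos 2) (hPpos 3)
        (by rw [hP1, hP2, hP3]; norm_num)
    · exact clf_powform 3 (by norm_num) (P 2) (P 3) (P 4) (hPpos 2) (hPpos 3) (hPpos 4)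
        (by rw [hP2, hP3, hP4]; norm_num)
    · exact clf_powform 4 (by norm_num) (P 3) (P 4) (P 5) (hPpos 3) (hPpos 4) (hPpos 5)
        (by rw [hP3, hP4, hP5]; norm_num)
    · exact clf_powform 5 (by norm_num) (P 4) (P 5) (P 6) (hPpos 4) (hPpos 5) (hPpos 6)
        (by rw [hP4, hP5, hP6]; norm_num)
    · exact clf_powform 6 (by norm_num) (P 5) (P 6) (P 7) (hPpos 5) (hPpos 6) (hPpos 7)
        (by rw [hP5, hP6, hP7]; norm_num)
    · exact clf_powform 7 (by norm_num) (P 6) (P 7) (P 8) (hPpos 6) (hPpos 7) (hPpos 8)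
        (by rw [hP6, hP7, hP8]; norm_num)
    · exact clf_powform 8 (by norm_num) (P 7) (P 8) (P 9) (hPpos 7) (hPpos 8) (hPpos 9)
        (by rw [hP7, hP8, hP9]; norm_num)
    · exact clf_powform 9 (by norm_num) (P 8) (P 9) (P 10) (hPpos 8) (hPpos 9) (hPpos 10)
        (by rw [hP8, hP9, hP10]; norm_num)
  · -- large case n ≥ 10
    have hx := hPpos (n-1)
    have hy := hPpos n
    have hz := hPpos (n+1)
    apply clf_logform n hn (P (n-1)) (P n) (P (n+1)) hx hy hz
    set N := (n:ℝ) with hNdef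
    have hN10 : (10:ℝ) ≤ N := by rw [hNdef]; exact_mod_cast hge
    have hn1 : ((n-1:ℕ):ℝ) = N - 1 := by
      rw [Nat.cast_sub (by omega : 1 ≤ n), Nat.cast_one]
    have hid : n - 1 + 1 = n := by omega
    have hb1 := (hbnd (n-1) (by omega)).1
    rw [hid, hn1] at hb1
    -- hb1 : (16*(N-1+1)^2 - 16*(N-1+1) - 12) * P (n-1) ≤ (N-1+1)^2 * P n
    have hb2 := (hbnd n (by omega)).2
    -- hb2 : (N+1) * P (n+1) ≤ 16*N * P n
    have hc := hC n (by omega)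
    set lx := Real.log (P (n-1)) with hlx
    set ly := Real.log (P n) with hly
    set lz := Real.log (P (n+1)) with hlz
    -- bound on d_{n+1}
    have s0 : lz - (Real.log 16 + ly) ≤ P (n+1) / (16 * P n) - 1 := by
      have h := Real.log_le_sub_one_of_pos (show 0 < P (n+1) / (16 * P n) by positivity)
      rwa [Real.log_div hz.ne' (by positivity), Real.log_mul (by norm_num) hy.ne'] at h
    have s0' : 16 * P n * (lz - Real.log 16 - ly) ≤ P (n+1) - 16 * P n := by
      have h := mul_le_mul_of_nonneg_left s0 (show (0:ℝ) ≤ 16 * P n by positivity)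
      have e : 16 * P n * (P (n+1) / (16 * P n) - 1) = P (n+1) - 16 * P n := by
        field_simp
      nlinarith [h, e]
    have s1 : 1 ≤ (N+1) * (Real.log 16 - lz + ly) := by
      nlinarith [s0', hb2, hy, mul_pos (show (0:ℝ) < 16 by norm_num) hy,
        (show (0:ℝ) < N+1 by linarith)]
    have s2 : N - 2 ≤ (N^2 - N) * (Real.log 16 - lz + ly) := by
      nlinarith [mul_le_mul_of_nonneg_left s1 (show (0:ℝ) ≤ N^2 - N by nlinarith),
        (show (0:ℝ) < N+1 by linarith)]
    -- bound on d_n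
    have t0 : Real.log 16 + lx - ly ≤ 16 * P (n-1) / P n - 1 := by
      have h := Real.log_le_sub_one_of_pos (show 0 < 16 * P (n-1) / P n by positivity)
      rwa [Real.log_div (by positivity) hy.ne', Real.log_mul (by norm_num) hx.ne'] at h
    have t0' : P n * (Real.log 16 + lx - ly) ≤ 16 * P (n-1) - P n := by
      have h := mul_le_mul_of_nonneg_left t0 hy.le
      have e : P n * (16 * P (n-1) / P n - 1) = 16 * P (n-1) - P n := by
        field_simp
      nlinarith [h, e]
    have hD : (0:ℝ) < 16*N^2 - 16*N - 12 := by nlinarith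
    have t1 : (16*N^2 - 16*N - 12) * (Real.log 16 + lx - ly) ≤ 16*N + 12 := by
      nlinarith [t0', hb1, hy, hD, mul_pos hD hy]
    have t2 : (N^2 + N) * (Real.log 16 + lx - ly) ≤ N + 17/5 := by
      nlinarith [mul_le_mul_of_nonneg_left t1 (show (0:ℝ) ≤ N^2 + N by nlinarith),
        hD, sq_nonneg (N - 10)]
    -- bound on N log 16 - ly
    have c1 : (2560/169 : ℝ) ≤ (16:ℝ)^n / P n := by
      rw [le_div_iff₀ hy]
      nlinarith [hc, mul_nonneg (show (0:ℝ) ≤ N - 10 by linarith) hy.le]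
    have c2 : Real.log ((2560:ℝ)/169) ≤ Real.log ((16:ℝ)^n / P n) :=
      Real.log_le_log (by norm_num) c1
    have c3 : Real.log ((16:ℝ)^n / P n) = N * Real.log 16 - ly := by
      rw [Real.log_div (by positivity) hy.ne', Real.log_pow]
    have c4 : Real.log ((2560:ℝ)/169) = 4 * Real.log 2 - Real.log ((169:ℝ)/160) := by
      rw [show ((2560:ℝ)/169) = 2^4/((169:ℝ)/160) by norm_num,
        Real.log_div (by norm_num) (by norm_num), Real.log_pow]
      norm_num
    have c5 : Real.log ((169:ℝ)/160) ≤ 9/160 := by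
      have h := Real.log_le_sub_one_of_pos (show (0:ℝ) < 169/160 by norm_num)
      linarith
    have u1 : 4 * Real.log 2 - 9/160 ≤ N * Real.log 16 - ly := by
      rw [c3] at c2
      rw [c4] at c2
      linarith
    -- assemble
    have expand : 2*(N^2-1)*ly - (N*(N-1)*lz + N*(N+1)*lx)
        = (N^2 - N) * (Real.log 16 - lz + ly) - (N^2 + N) * (Real.log 16 + lx - ly)
          + 2 * (N * Real.log 16 - ly) := by ring
    have hlog2 := Real.log_two_gt_d9
    linarith [s2, t2, u1, expand, hlog2]
end

section
/- The sequence of quotients { V_{n+1}^(1/(n+1)) / V_n^(1/n) }_{n≥1} is strictly decreasing, i.e., for every integer n ≥ 2, V_n^(1/n) / V_{n-1}^(1/(n-1)) > V_{n+1}^(1/(n+1)) / V_n^(1/n). -/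
set_option maxHeartbeats 4000000 in
theorem Vn_root_quotient_strict_anti (V : ℕ → ℝ)
    (hV0 : V 0 = 1) (hV1 : V 1 = 8)
    (hVrec : ∀ n : ℕ, 1 ≤ n →
      (n : ℝ) * ((n : ℝ) + 1) ^ 2 * V (n + 1)
        = 8 * (n : ℝ) * (3 * (n : ℝ) ^ 2 + 5 * (n : ℝ) + 1) * V n
          - 128 * ((n : ℝ) - 1) * ((n : ℝ) + 1) ^ 2 * V (n - 1))
    (hVpos : ∀ n : ℕ, 0 < V n) :
    ∀ n : ℕ, 2 ≤ n →
      V n ^ ((1 : ℝ) / (n : ℝ)) / V (n - 1) ^ ((1 : ℝ) / ((n : ℝ) - 1))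
        > V (n + 1) ^ ((1 : ℝ) / ((n : ℝ) + 1)) / V n ^ ((1 : ℝ) / (n : ℝ)) := by
  -- normalized recurrence
  have hrecR : ∀ m : ℕ, ((m:ℝ)+1)*((m:ℝ)+2)^2 * V (m+2)
      = 8*((m:ℝ)+1)*(3*((m:ℝ)+1)^2+5*((m:ℝ)+1)+1) * V (m+1)
        - 128*(m:ℝ)*((m:ℝ)+2)^2 * V m := by
    intro m
    have h := hVrec (m+1) (by omega)
    have hidx : m + 1 - 1 = m := rfl
    rw [hidx] at h
    push_cast at h
    linear_combination h
  have hV2 : V 2 = 144 := by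
    have h := hVrec 1 le_rfl
    norm_num [hV0, hV1] at h
    linarith
  -- cleared lower bound : (16(t+1)(t+2)(t+3)+16) V m ≤ (t+1)(t+2)(t+3) V (m+1)
  have low : ∀ m : ℕ, 1 ≤ m →
      (16*((m:ℝ)+1)*((m:ℝ)+2)*((m:ℝ)+3) + 16) * V m
        ≤ ((m:ℝ)+1)*((m:ℝ)+2)*((m:ℝ)+3) * V (m+1) := by
    intro m hm
    induction m, hm using Nat.le_induction with
    | base => norm_num [hV1, hV2]
    | succ m hm ih =>
      have ht : (1:ℝ) ≤ (m:ℝ) := by exact_mod_cast hm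
      set t : ℝ := (m:ℝ) with htdef
      have ht0 : (0:ℝ) ≤ t := by linarith
      have hp := hVpos m
      have hq := hVpos (m+1)
      have hrec := hrecR m
      have ht2 : (0:ℝ) ≤ t^2 := sq_nonneg t
      have ht3 : (0:ℝ) ≤ t^3 := by positivity
      have ht4 : (0:ℝ) ≤ t^4 := by positivity
      have hu : 0 ≤ (t+1)*(t+2)*(t+3) * V (m+1) - (16*(t+1)*(t+2)*(t+3)+16) * V m := by
        linarith [ih]
      have hc3 : (0:ℝ) ≤ 7168 + 18304*t + 16384*t^2 + 6016*t^3 + 768*t^4 := by linarith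
      have hD : (0:ℝ) < 16*(t+1)*(t+2)*(t+3)+16 := by nlinarith
      have hmu : (0:ℝ) ≤ 128*t*(t+2)^2*(t+3)*(t+4) := by nlinarith
      have hG2 : (t+1)*(t+2)*((16*(t+2)*(t+3)*(t+4)+16) * V (m+1))
          ≤ (t+3)*(t+4)*(8*(t+1)*(3*t^2+11*t+9) * V (m+1) - 128*t*(t+2)^2 * V m) := by
        have h0 : 0 ≤ (7168 + 18304*t + 16384*t^2 + 6016*t^3 + 768*t^4) * V (m+1)
            + 128*t*(t+2)^2*(t+3)*(t+4)
              * ((t+1)*(t+2)*(t+3) * V (m+1) - (16*(t+1)*(t+2)*(t+3)+16) * V m) :=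
          add_nonneg (mul_nonneg hc3 hq.le) (mul_nonneg hmu hu)
        have h1 : (t+3)*(t+4)*(8*(t+1)*(3*t^2+11*t+9) * V (m+1) - 128*t*(t+2)^2 * V m)
            - (t+1)*(t+2)*((16*(t+2)*(t+3)*(t+4)+16) * V (m+1))
            = ((7168 + 18304*t + 16384*t^2 + 6016*t^3 + 768*t^4) * V (m+1)
              + 128*t*(t+2)^2*(t+3)*(t+4)
                * ((t+1)*(t+2)*(t+3) * V (m+1) - (16*(t+1)*(t+2)*(t+3)+16) * V m))
              / (16*(t+1)*(t+2)*(t+3)+16) := by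
          rw [eq_div_iff (ne_of_gt hD)]; ring
        have h2 := div_nonneg h0 hD.le
        rw [← h1] at h2
        linarith
      have hrec2 : (t+3)*(t+4)*((t+1)*(t+2)^2 * V (m+2))
          = (t+3)*(t+4)*(8*(t+1)*(3*(t+1)^2+5*(t+1)+1) * V (m+1) - 128*t*(t+2)^2 * V m) := by
        rw [hrec]
      have hcomb : (t+1)*(t+2)*((16*(t+2)*(t+3)*(t+4)+16) * V (m+1))
          ≤ (t+1)*(t+2)*((t+2)*(t+3)*(t+4) * V (m+2)) := by nlinarith [hG2, hrec2]
      have hpos12 : (0:ℝ) < (t+1)*(t+2) := by nlinarith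
      have := le_of_mul_le_mul_left hcomb hpos12
      push_cast
      linarith
  -- cleared upper bound
  have upp : ∀ m : ℕ, 1 ≤ m →
      ((m:ℝ)*((m:ℝ)+1)*((m:ℝ)+2)) * V (m+1)
        ≤ (16*(m:ℝ)*((m:ℝ)+1)*((m:ℝ)+2) + 44) * V m := by
    intro m hm
    induction m, hm using Nat.le_induction with
    | base => norm_num [hV1, hV2]
    | succ m hm ih =>
      have ht : (1:ℝ) ≤ (m:ℝ) := by exact_mod_cast hm
      set t : ℝ := (m:ℝ) with htdef
      have ht0 : (0:ℝ) ≤ t := by linarith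
      have hp := hVpos m
      have hq := hVpos (m+1)
      have hrec := hrecR m
      have hc5 : (0:ℝ) ≤ 2816 - 592*t - 1408*t^2 + 288*t^3 + 224*t^4 := by
        linarith [pow_nonneg (by linarith : (0:ℝ) ≤ t - 1) 4,
          pow_nonneg (by linarith : (0:ℝ) ≤ t - 1) 3, sq_nonneg (t - 203/100)]
      have hDp : (0:ℝ) < 16*t*(t+1)*(t+2)+44 := by nlinarith
      have hu : 0 ≤ (16*t*(t+1)*(t+2)+44) * V m - (t*(t+1)*(t+2)) * V (m+1) := by
        linarith [ih]
      have hmu : (0:ℝ) ≤ 128*t*(t+2)^2*(t+3) := by nlinarith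
      have hG2 : (t+3)*(8*(t+1)*(3*t^2+11*t+9) * V (m+1) - 128*t*(t+2)^2 * V m)
          ≤ (t+2)*((16*(t+1)*(t+2)*(t+3)+44) * V (m+1)) := by
        have h0 : 0 ≤ (2816 - 592*t - 1408*t^2 + 288*t^3 + 224*t^4) * V (m+1)
            + 128*t*(t+2)^2*(t+3)
              * ((16*t*(t+1)*(t+2)+44) * V m - (t*(t+1)*(t+2)) * V (m+1)) :=
          add_nonneg (mul_nonneg hc5 hq.le) (mul_nonneg hmu hu)
        have h1 : (t+2)*((16*(t+1)*(t+2)*(t+3)+44) * V (m+1))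
            - (t+3)*(8*(t+1)*(3*t^2+11*t+9) * V (m+1) - 128*t*(t+2)^2 * V m)
            = ((2816 - 592*t - 1408*t^2 + 288*t^3 + 224*t^4) * V (m+1)
              + 128*t*(t+2)^2*(t+3)
                * ((16*t*(t+1)*(t+2)+44) * V m - (t*(t+1)*(t+2)) * V (m+1)))
              / (16*t*(t+1)*(t+2)+44) := by
          rw [eq_div_iff (ne_of_gt hDp)]; ring
        have h2 := div_nonneg h0 hDp.le
        rw [← h1] at h2
        linarith
      have hrec2 : (t+3)*((t+1)*(t+2)^2 * V (m+2))
          = (t+3)*(8*(t+1)*(3*(t+1)^2+5*(t+1)+1) * V (m+1) - 128*t*(t+2)^2 * V m) := by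
        rw [hrec]
      have hcomb : (t+2)*(((t+1)*(t+2)*(t+3)) * V (m+2))
          ≤ (t+2)*((16*(t+1)*(t+2)*(t+3)+44) * V (m+1)) := by nlinarith [hG2, hrec2]
      have hpos2 : (0:ℝ) < (t+2) := by linarith
      have := le_of_mul_le_mul_left hcomb hpos2
      push_cast
      linarith
  -- log-concavity
  have mono : ∀ m : ℕ, 1 ≤ m → V (m+2) * V m ≤ V (m+1)^2 := by
    intro m hm
    have ht : (1:ℝ) ≤ (m:ℝ) := by exact_mod_cast hm
    set t : ℝ := (m:ℝ) with htdef
    have ht0 : (0:ℝ) ≤ t := by linarith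
    have hp := hVpos m
    have hq := hVpos (m+1)
    have hrec := hrecR m
    have ht2 : (0:ℝ) ≤ t^2 := sq_nonneg t
    have ht3 : (0:ℝ) ≤ t^3 := by positivity
    have ht4 : (0:ℝ) ≤ t^4 := by positivity
    have ht5 : (0:ℝ) ≤ t^5 := by positivity
    have ht6 : (0:ℝ) ≤ t^6 := by positivity
    have hu : 0 ≤ (t+1)*(t+2)*(t+3) * V (m+1) - (16*(t+1)*(t+2)*(t+3)+16) * V m := by
      linarith [low m hm]
    have hc2 : (0:ℝ) ≤ 464 + 1448*t + 1840*t^2 + 1240*t^3 + 472*t^4 + 96*t^5 + 8*t^6 := by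
      linarith
    have hc1 : (0:ℝ) ≤ 1792 + 4224*t + 3456*t^2 + 1152*t^3 + 128*t^4 := by linarith
    have hw : 0 ≤ (t+1)*(t+2)^2 * ((t+1)*(t+2)*(t+3) * V (m+1) - (16*(t+1)*(t+2)*(t+3)+16) * V m)
        + (464 + 1448*t + 1840*t^2 + 1240*t^3 + 472*t^4 + 96*t^5 + 8*t^6) * V m := by
      have := mul_nonneg (show (0:ℝ) ≤ (t+1)*(t+2)^2 by nlinarith) hu
      have := mul_nonneg hc2 hp.le
      linarith
    have hE2 : (0:ℝ) < ((t+1)*(t+2)*(t+3))^2 := by nlinarith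
    have hQ : 0 ≤ (t+1)*(t+2)^2 * V (m+1)^2 - 8*(t+1)*(3*t^2+11*t+9) * V m * V (m+1)
        + 128*t*(t+2)^2 * V m^2 := by
      have h0 : 0 ≤ ((t+1)*(t+2)*(t+3) * V (m+1) - (16*(t+1)*(t+2)*(t+3)+16) * V m)
            * ((t+1)*(t+2)^2 * ((t+1)*(t+2)*(t+3) * V (m+1) - (16*(t+1)*(t+2)*(t+3)+16) * V m)
              + (464 + 1448*t + 1840*t^2 + 1240*t^3 + 472*t^4 + 96*t^5 + 8*t^6) * V m)
          + (1792 + 4224*t + 3456*t^2 + 1152*t^3 + 128*t^4) * V m^2 :=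
        add_nonneg (mul_nonneg hu hw) (mul_nonneg hc1 (sq_nonneg _))
      have h1 : (t+1)*(t+2)^2 * V (m+1)^2 - 8*(t+1)*(3*t^2+11*t+9) * V m * V (m+1)
          + 128*t*(t+2)^2 * V m^2
          = (((t+1)*(t+2)*(t+3) * V (m+1) - (16*(t+1)*(t+2)*(t+3)+16) * V m)
            * ((t+1)*(t+2)^2 * ((t+1)*(t+2)*(t+3) * V (m+1) - (16*(t+1)*(t+2)*(t+3)+16) * V m)
              + (464 + 1448*t + 1840*t^2 + 1240*t^3 + 472*t^4 + 96*t^5 + 8*t^6) * V m)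
            + (1792 + 4224*t + 3456*t^2 + 1152*t^3 + 128*t^4) * V m^2)
            / ((t+1)*(t+2)*(t+3))^2 := by
        rw [eq_div_iff (ne_of_gt hE2)]; ring
      have h2 := div_nonneg h0 hE2.le
      rw [← h1] at h2
      exact h2
    have hrecm : ((t+1)*(t+2)^2 * V (m+2)) * V m
        = (8*(t+1)*(3*(t+1)^2+5*(t+1)+1) * V (m+1) - 128*t*(t+2)^2 * V m) * V m := by
      rw [hrec]
    have hcomb : ((t+1)*(t+2)^2) * (V (m+2) * V m) ≤ ((t+1)*(t+2)^2) * V (m+1)^2 := by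
      nlinarith [hQ, hrecm]
    have hpos12 : (0:ℝ) < (t+1)*(t+2)^2 := by nlinarith
    exact le_of_mul_le_mul_left hcomb hpos12
  -- budget : log V m ≤ log 8 + (m-1) log 16 + 11/16 - 11/(8 m (m+1))
  have budget : ∀ m : ℕ, 1 ≤ m →
      Real.log (V m) ≤ Real.log 8 + ((m:ℝ)-1)*Real.log 16 + 11/16
        - 11/(8*(m:ℝ)*((m:ℝ)+1)) := by
    intro m hm
    induction m, hm using Nat.le_induction with
    | base => norm_num [hV1]
    | succ m hm ih =>
      have ht : (1:ℝ) ≤ (m:ℝ) := by exact_mod_cast hm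
      set t : ℝ := (m:ℝ) with htdef
      have ht0 : (0:ℝ) ≤ t := by linarith
      have hp := hVpos m
      have hq := hVpos (m+1)
      have hE : (0:ℝ) < t*(t+1)*(t+2) :=
        mul_pos (mul_pos (by linarith) (by linarith)) (by linarith)
      have hDp : (0:ℝ) < 16*t*(t+1)*(t+2)+44 := by nlinarith
      have h1 : V (m+1) ≤ (16*t*(t+1)*(t+2)+44)/(t*(t+1)*(t+2)) * V m := by
        rw [div_mul_eq_mul_div, le_div_iff₀ hE]
        nlinarith [upp m hm]
      have h2 : Real.log (V (m+1))
          ≤ Real.log ((16*t*(t+1)*(t+2)+44)/(t*(t+1)*(t+2)) * V m) :=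
        Real.log_le_log hq h1
      have hXpos : (0:ℝ) < (16*t*(t+1)*(t+2)+44)/(16*(t*(t+1)*(t+2))) := by positivity
      have h3 : Real.log ((16*t*(t+1)*(t+2)+44)/(t*(t+1)*(t+2)) * V m)
          = Real.log ((16*t*(t+1)*(t+2)+44)/(t*(t+1)*(t+2))) + Real.log (V m) :=
        Real.log_mul (by positivity) (ne_of_gt hp)
      have h4 : Real.log ((16*t*(t+1)*(t+2)+44)/(t*(t+1)*(t+2)))
          ≤ Real.log 16 + 11/(4*(t*(t+1)*(t+2))) := by
        have e1 : (16*t*(t+1)*(t+2)+44)/(t*(t+1)*(t+2))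
            = 16 * ((16*t*(t+1)*(t+2)+44)/(16*(t*(t+1)*(t+2)))) := by
          field_simp
        rw [e1, Real.log_mul (by norm_num) (ne_of_gt hXpos)]
        have h5 := Real.log_le_sub_one_of_pos hXpos
        have h6 : (16*t*(t+1)*(t+2)+44)/(16*(t*(t+1)*(t+2))) - 1
            = 11/(4*(t*(t+1)*(t+2))) := by
          field_simp; ring
        linarith
      have hfr : 11/(4*(t*(t+1)*(t+2))) = 11/(8*t*(t+1)) - 11/(8*(t+1)*(t+1+1)) := by
        rw [div_sub_div _ _ (by positivity) (by nlinarith), div_eq_div_iff (by positivity) (by nlinarith)]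
        ring
      push_cast
      show Real.log (V (m+1)) ≤ Real.log 8 + (t+1-1)*Real.log 16 + 11/16 - 11/(8*(t+1)*(t+1+1))
      linarith [ih]
  -- final assembly
  intro n hn
  obtain ⟨k, rfl⟩ : ∃ k, n = k + 2 := ⟨n - 2, by omega⟩
  have hidx : k + 2 - 1 = k + 1 := rfl
  rw [hidx]
  have hk0 : (0:ℝ) ≤ (k:ℝ) := Nat.cast_nonneg k
  set K : ℝ := (k:ℝ) with hKdef
  have hN : (0:ℝ) < K + 2 := by linarith
  have hN1 : (0:ℝ) < K + 1 := by linarith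
  have hN3 : (0:ℝ) < K + 3 := by linarith
  set a := Real.log (V (k+1)) with hadef
  set b := Real.log (V (k+2)) with hbdef
  set c := Real.log (V (k+3)) with hcdef
  -- f1 : log 16 + a ≤ b
  have h16 : (16:ℝ) * V (k+1) ≤ V (k+2) := by
    have hl := low (k+1) (by omega)
    push_cast at hl
    have hE : (0:ℝ) < (K+2)*(K+3)*(K+4) :=
      mul_pos (mul_pos (by linarith) (by linarith)) (by linarith)
    have h : ((K+2)*(K+3)*(K+4)) * (16 * V (k+1)) ≤ ((K+2)*(K+3)*(K+4)) * V (k+1+1) := by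
      nlinarith [hVpos (k+1)]
    have := le_of_mul_le_mul_left h hE
    simpa using this
  have f1 : Real.log 16 + a ≤ b := by
    have h := Real.log_le_log (by nlinarith [hVpos (k+1)]) h16
    rw [Real.log_mul (by norm_num) (ne_of_gt (hVpos (k+1)))] at h
    exact h
  -- f2 : c + a ≤ 2 b
  have f2 : c + a ≤ 2 * b := by
    have hm := mono (k+1) (by omega)
    have h := Real.log_le_log (mul_pos (hVpos (k+1+2)) (hVpos (k+1))) hm
    rw [Real.log_mul (ne_of_gt (hVpos (k+1+2))) (ne_of_gt (hVpos (k+1))),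
      Real.log_pow] at h
    have hidx2 : k + 1 + 2 = k + 3 := by omega
    rw [hidx2] at h
    push_cast at h
    linarith
  -- f3 : b < (K+2) log 16
  have f3 : b < (K + 2) * Real.log 16 := by
    have hb := budget (k+2) (by omega)
    push_cast at hb
    have hlog2 : (11:ℝ)/16 < Real.log 2 := by
      have := Real.log_two_gt_d9
      linarith
    have h16eq : Real.log 16 = Real.log 2 + Real.log 8 := by
      rw [← Real.log_mul (by norm_num) (by norm_num)]
      norm_num
    have hposfrac : (0:ℝ) < 11/(8*(K+2)*(K+2+1)) := by positivity
    have hb' : b ≤ Real.log 8 + (K+2-1)*Real.log 16 + 11/16 - 11/(8*(K+2)*(K+2+1)) := hb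
    linarith [hb', hlog2, hposfrac]
  -- key inequality
  have e1 : 0 ≤ (K+2)*(K+1)*(2*b - (c+a)) :=
    mul_nonneg (mul_nonneg hN.le hN1.le) (by linarith)
  have e2 : 0 ≤ (K+2)*(b - (Real.log 16 + a)) := mul_nonneg hN.le (by linarith)
  have e3 : 0 < (K+2)*Real.log 16 - b := by linarith
  have hkey : 0 < 2*((K+2)^2-1)*b - (K+2)*((K+2)+1)*a - (K+2)*((K+2)-1)*c := by
    nlinarith [e1, e2, e3]
  -- convert goal to exponentials
  rw [Real.rpow_def_of_pos (hVpos (k+2)), Real.rpow_def_of_pos (hVpos (k+1)),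
    Real.rpow_def_of_pos (hVpos (k+2+1)), ← Real.exp_sub, ← Real.exp_sub,
    gt_iff_lt, Real.exp_lt_exp]
  push_cast
  have hidx3 : k + 2 + 1 = k + 3 := by omega
  rw [hidx3]
  have hd1 : (K + 2) ≠ 0 := ne_of_gt hN
  have hd2 : (K + 2 - 1) ≠ 0 := by
    intro h; apply ne_of_gt hN1; linarith
  have hd3 : (K + 2 + 1) ≠ 0 := by
    intro h; apply ne_of_gt hN3; linarith
  have hid : (b * (1/(K+2)) - a * (1/(K+2-1)))
      - (c * (1/(K+2+1)) - b * (1/(K+2)))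
      = (2*((K+2)^2-1)*b - (K+2)*((K+2)+1)*a - (K+2)*((K+2)-1)*c)
        / ((K+2)*(K+2-1)*(K+2+1)) := by
    field_simp
    ring
  have hden : (0:ℝ) < (K+2)*(K+2-1)*(K+2+1) := by nlinarith
  have h5 := div_pos hkey hden
  rw [← hid] at h5
  linarith
end
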